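/- arXiv:1211.0330 — 6 statements merged into one kernel-verified Lean document; each statement's English description precedes it below -/
import Mathlib

section
/- Let A be an m × n matrix over the complex numbers. If A is a (q,k,t)-design matrix, then rank(A) ≥ n / (1 + q(q−1)t/k), and consequently rank(A) ≥ n − ntq(q−1)/k. -/
/-- An `m × n` matrix `A` over a field is a `(q,k,t)`-design matrix if every row has
support of size at most `q`, every column has support of size at least `k`, and the
supports of any two distinct columns intersect in at most `t` coordinates. -/
def IsDesignMatrix {F : Type*} [Field F] {m n : ℕ}
    (A : Matrix (Fin m) (Fin n) F) (q k t : ℕ) : Prop :=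
  (∀ i : Fin m, {j : Fin n | A i j ≠ 0}.ncard ≤ q) ∧
  (∀ j : Fin n, k ≤ {i : Fin m | A i j ≠ 0}.ncard) ∧
  (∀ j₁ j₂ : Fin n, j₁ ≠ j₂ →
    ({i : Fin m | A i j₁ ≠ 0} ∩ {i : Fin m | A i j₂ ≠ 0}).ncard ≤ t)

/-!
Rescale rows and columns of `A` by positive reals, which changes neither rank nor support, to get
a matrix `B` whose columns have unit `ℓ²`-norm and whose rows have squared `ℓ²`-norm at most
`q / k + δ`: the target row sums `q / k` come from spreading each column's unit mass evenly over
its at least `k` nonzero entries. The row scaling `exp u` maximises the concave `scalingPotential`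
minus a small quadratic penalty; Gibbs' inequality bounds the potential above, and at the
maximiser its partial derivatives (target minus actual row sums of the column-normalised matrix)
vanish up to the penalty gradient.

The Gram matrix `M = Bᴴ * B` has unit diagonal, so `tr M = n`, while Cauchy–Schwarz over the
common support of two columns gives `‖M‖_F² ≤ n (1 + (q - 1) t (q / k + δ))`. For Hermitian `M`,
Cauchy–Schwarz on the nonzero eigenvalues gives `(tr M)² ≤ rank M * ‖M‖_F²`; let `δ → 0`.
-/

open Finset Matrix Real Topology

namespace Matrix.IsHermitian
variable {𝕜 n : Type*} [RCLike 𝕜] [Fintype n] [DecidableEq n] {A : Matrix n n 𝕜}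

lemma trace_mul_self_eq_sum_sq_eigenvalues (hA : A.IsHermitian) :
    (A * A).trace = ∑ i, ((hA.eigenvalues i ^ 2 : ℝ) : 𝕜) := by
  conv_lhs => rw [hA.spectral_theorem, ← map_mul]
  rw [Unitary.conjStarAlgAut_apply, trace_mul_cycle,
    Unitary.coe_star_mul_self, one_mul, diagonal_mul_diagonal, trace_diagonal]
  simp [sq]

lemma sq_sum_eigenvalues_le_rank_mul (hA : A.IsHermitian) :
    (∑ i, hA.eigenvalues i) ^ 2 ≤ A.rank * ∑ i, hA.eigenvalues i ^ 2 := by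
  have hrank : (A.rank : ℝ) = #{i | hA.eigenvalues i ≠ 0} := by
    rw [hA.rank_eq_card_non_zero_eigs, Fintype.card_subtype]
  rw [hrank, ← sum_filter_ne_zero]
  calc (∑ i with hA.eigenvalues i ≠ 0, hA.eigenvalues i) ^ 2
      ≤ #{i | hA.eigenvalues i ≠ 0} * ∑ i with hA.eigenvalues i ≠ 0, hA.eigenvalues i ^ 2 :=
        sq_sum_le_card_mul_sum_sq
    _ ≤ _ := by gcongr; exact filter_subset _ _

lemma re_trace_sq_le_rank_mul_sum_norm_sq (hA : A.IsHermitian) :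
    RCLike.re A.trace ^ 2 ≤ A.rank * ∑ i, ∑ j, ‖A i j‖ ^ 2 := by
  have htrace : RCLike.re A.trace = ∑ i, hA.eigenvalues i := by
    simp [hA.trace_eq_sum_eigenvalues]
  have hfrob : ∑ i, ∑ j, ‖A i j‖ ^ 2 = ∑ i, hA.eigenvalues i ^ 2 := by
    have h := congrArg RCLike.re hA.trace_mul_self_eq_sum_sq_eigenvalues
    simp only [trace, diag, mul_apply, map_sum, RCLike.ofReal_re] at h
    rw [← h]
    refine sum_congr rfl fun i _ => sum_congr rfl fun j _ => ?_
    rw [← hA.apply j i, RCLike.star_def, RCLike.mul_conj]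
    norm_cast
  rw [htrace, hfrob]
  exact hA.sq_sum_eigenvalues_le_rank_mul

end Matrix.IsHermitian

section Gram
variable {𝕜 ι κ : Type*} [RCLike 𝕜] [Fintype ι]

lemma norm_sq_conjTranspose_mul_self_apply_le (B : Matrix ι κ 𝕜) (j j' : κ) :
    ‖(Bᴴ * B) j j'‖ ^ 2 ≤ (∑ i with B i j ≠ 0 ∧ B i j' ≠ 0, ‖B i j‖ ^ 2) *
      ∑ i with B i j ≠ 0 ∧ B i j' ≠ 0, ‖B i j'‖ ^ 2 := by
  have hsupp : (Bᴴ * B) j j' = ∑ i with B i j ≠ 0 ∧ B i j' ≠ 0, star (B i j) * B i j' := by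
    rw [mul_apply, sum_filter_of_ne fun i _ h => ?_]
    · rfl
    · exact ⟨fun h0 => h (by simp [h0]), fun h0 => h (by simp [h0])⟩
  calc ‖(Bᴴ * B) j j'‖ ^ 2 ≤ (∑ i with B i j ≠ 0 ∧ B i j' ≠ 0, ‖B i j‖ * ‖B i j'‖) ^ 2 := by
        rw [hsupp]
        gcongr
        refine (norm_sum_le _ _).trans_eq (sum_congr rfl fun i _ => ?_)
        rw [norm_mul, norm_star]
    _ ≤ _ := sum_mul_sq_le_sq_mul_sq _ _ _

lemma sum_overlap_norm_sq_le [Fintype κ] [DecidableEq κ] {B : Matrix ι κ 𝕜}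
    {q : ℕ} (hrow : ∀ i, #{j | B i j ≠ 0} ≤ q) (j : κ) :
    ∑ j' ∈ univ.erase j, ∑ i with B i j ≠ 0 ∧ B i j' ≠ 0, ‖B i j‖ ^ 2 ≤
      (q - 1) * ∑ i, ‖B i j‖ ^ 2 := by
  simp_rw [sum_filter]
  rw [sum_comm, mul_sum]
  refine sum_le_sum fun i _ => ?_
  by_cases hij : B i j = 0
  · simp [hij]
  have hcard : #{j' ∈ univ.erase j | B i j' ≠ 0} = #{j' | B i j' ≠ 0} - 1 := by
    rw [filter_erase, card_erase_of_mem (by simpa using hij)]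
  simp only [hij, ne_eq, not_false_eq_true, true_and]
  rw [← sum_filter, sum_const, nsmul_eq_mul, hcard]
  gcongr
  rw [Nat.cast_sub (card_pos.2 ⟨j, by simpa using hij⟩), Nat.cast_one]
  exact sub_le_sub_right (by exact_mod_cast hrow i) 1

lemma conjTranspose_mul_self_apply_self (B : Matrix ι κ 𝕜) (j : κ) :
    (Bᴴ * B) j j = ((∑ i, ‖B i j‖ ^ 2 : ℝ) : 𝕜) := by
  simp only [mul_apply, conjTranspose_apply, RCLike.star_def, RCLike.conj_mul]
  push_cast
  rfl

lemma sum_norm_sq_conjTranspose_mul_self_le [Fintype κ] [DecidableEq κ] {B : Matrix ι κ 𝕜}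
    {q t : ℕ} {ρ : ℝ} (hρ0 : 0 ≤ ρ) (hrow : ∀ i, #{j | B i j ≠ 0} ≤ q)
    (hinter : ∀ j j', j ≠ j' → #{i | B i j ≠ 0 ∧ B i j' ≠ 0} ≤ t)
    (hunit : ∀ j, ∑ i, ‖B i j‖ ^ 2 = 1) (hρ : ∀ i j, ‖B i j‖ ^ 2 ≤ ρ) (j : κ) :
    ∑ j', ‖(Bᴴ * B) j j'‖ ^ 2 ≤ 1 + (q - 1) * t * ρ := by
  have hdiag : ‖(Bᴴ * B) j j‖ ^ 2 = 1 := by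
    simp [conjTranspose_mul_self_apply_self, hunit]
  have hoff : ∀ j' ∈ univ.erase j, ‖(Bᴴ * B) j j'‖ ^ 2 ≤
      (∑ i with B i j ≠ 0 ∧ B i j' ≠ 0, ‖B i j‖ ^ 2) * (t * ρ) := by
    intro j' hj'
    refine (norm_sq_conjTranspose_mul_self_apply_le B j j').trans
      (mul_le_mul_of_nonneg_left ?_ (sum_nonneg fun i _ => by positivity))
    calc ∑ i with B i j ≠ 0 ∧ B i j' ≠ 0, ‖B i j'‖ ^ 2
        ≤ #{i | B i j ≠ 0 ∧ B i j' ≠ 0} * ρ := by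
          simpa using sum_le_card_nsmul _ _ _ fun i _ => hρ i j'
      _ ≤ t * ρ := by gcongr; exact hinter j j' (ne_of_mem_erase hj').symm
  rw [← add_sum_erase _ _ (mem_univ j), hdiag]
  gcongr
  calc ∑ j' ∈ univ.erase j, ‖(Bᴴ * B) j j'‖ ^ 2
      ≤ (∑ j' ∈ univ.erase j, ∑ i with B i j ≠ 0 ∧ B i j' ≠ 0, ‖B i j‖ ^ 2) * (t * ρ) := by
        rw [sum_mul]; exact sum_le_sum hoff
    _ ≤ (q - 1) * (∑ i, ‖B i j‖ ^ 2) * (t * ρ) := by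
        gcongr
        exact sum_overlap_norm_sq_le hrow j
    _ = (q - 1) * t * ρ := by rw [hunit]; ring

open scoped ComplexOrder in
theorem card_le_rank_mul_of_unit_columns [Fintype κ] [DecidableEq κ] [Nonempty κ]
    {B : Matrix ι κ 𝕜} {q t : ℕ} {ρ : ℝ} (hrow : ∀ i, #{j | B i j ≠ 0} ≤ q)
    (hinter : ∀ j j', j ≠ j' → #{i | B i j ≠ 0 ∧ B i j' ≠ 0} ≤ t)
    (hunit : ∀ j, ∑ i, ‖B i j‖ ^ 2 = 1) (hρ : ∀ i j, ‖B i j‖ ^ 2 ≤ ρ) :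
    (Fintype.card κ : ℝ) ≤ B.rank * (1 + (q - 1) * t * ρ) := by
  obtain ⟨j⟩ := ‹Nonempty κ›
  have hρ0 : 0 ≤ ρ := by
    obtain ⟨i, -, -⟩ := exists_ne_zero_of_sum_ne_zero ((hunit j).trans_ne one_ne_zero)
    exact (sq_nonneg _).trans (hρ i j)
  have htrace : RCLike.re (Bᴴ * B).trace = Fintype.card κ := by
    simp [trace, conjTranspose_mul_self_apply_self, hunit]
  have hfrob : ∑ j, ∑ j', ‖(Bᴴ * B) j j'‖ ^ 2 ≤ Fintype.card κ * (1 + (q - 1) * t * ρ) := by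
    refine (sum_le_sum fun j _ =>
      sum_norm_sq_conjTranspose_mul_self_le hρ0 hrow hinter hunit hρ j).trans_eq ?_
    simp [mul_add]
  have hspec := (isHermitian_conjTranspose_mul_self B).re_trace_sq_le_rank_mul_sum_norm_sq
  rw [htrace, rank_conjTranspose_mul_self] at hspec
  have hn : (0 : ℝ) < Fintype.card κ := by exact_mod_cast Fintype.card_pos
  refine le_of_mul_le_mul_left ?_ hn
  calc (Fintype.card κ : ℝ) * Fintype.card κ ≤ B.rank * ∑ j, ∑ j', ‖(Bᴴ * B) j j'‖ ^ 2 := by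
        rw [← sq]; exact hspec
    _ ≤ B.rank * (Fintype.card κ * (1 + (q - 1) * t * ρ)) := by gcongr
    _ = _ := by ring
end Gram

lemma sum_mul_log_div_le_log_sum {ι : Type*} {s : Finset ι} {w x : ι → ℝ}
    (hw : ∀ i ∈ s, 0 ≤ w i) (hw1 : ∑ i ∈ s, w i = 1) (hx : ∀ i ∈ s, 0 ≤ x i)
    (hwx : ∀ i ∈ s, w i ≠ 0 → 0 < x i) :
    ∑ i ∈ s, w i * log (x i / w i) ≤ log (∑ i ∈ s, x i) := by
  classical
  set S := {i ∈ s | w i ≠ 0}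
  have hS1 : ∑ i ∈ S, w i = 1 := by rw [sum_filter_ne_zero, hw1]
  have hSpos : 0 < ∑ i ∈ S, x i := by
    obtain ⟨i, hi, -⟩ := exists_ne_zero_of_sum_ne_zero (hS1.trans_ne one_ne_zero)
    have hi' := mem_filter.1 hi
    exact sum_pos' (fun j hj => hx j (mem_filter.1 hj).1) ⟨i, hi, hwx i hi'.1 hi'.2⟩
  have hjensen := strictConcaveOn_log_Ioi.concaveOn.le_map_sum
    (t := S) (p := fun i => x i / w i) (fun i hi => hw i (mem_filter.1 hi).1) hS1
    fun i hi => div_pos (hwx i (mem_filter.1 hi).1 (mem_filter.1 hi).2)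
      ((hw i (mem_filter.1 hi).1).lt_of_ne' (mem_filter.1 hi).2)
  have hmean : ∑ i ∈ S, w i • (x i / w i) = ∑ i ∈ S, x i :=
    sum_congr rfl fun i hi => mul_div_cancel₀ _ (mem_filter.1 hi).2
  calc ∑ i ∈ s, w i * log (x i / w i) = ∑ i ∈ S, w i • log (x i / w i) := by
        rw [sum_filter_of_ne fun i _ h => left_ne_zero_of_mul h]; rfl
    _ ≤ log (∑ i ∈ S, x i) := hmean ▸ hjensen
    _ ≤ log (∑ i ∈ s, x i) :=
        log_le_log hSpos (sum_le_sum_of_subset_of_nonneg (filter_subset _ _)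
          fun i hi _ => hx i hi)

section Scaling
variable {ι κ : Type*} [Fintype ι] {P : ι → κ → ℝ}

lemma exists_pos_of_sum_eq_one {R : ι → κ → ℝ}
    (hRP : ∀ i j, R i j ≠ 0 → 0 < P i j) (hRcol : ∀ j, ∑ i, R i j = 1) (j : κ) :
    ∃ i, 0 < P i j := by
  obtain ⟨i, -, hi⟩ := exists_ne_zero_of_sum_ne_zero ((hRcol j).trans_ne one_ne_zero)
  exact ⟨i, hRP i j hi⟩

noncomputable def scalingPotential [Fintype κ] (P : ι → κ → ℝ) (s u : ι → ℝ) : ℝ :=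
  ∑ i, s i * u i - ∑ j, log (∑ i, exp (u i) * P i j)

lemma sum_exp_mul_pos (hP : ∀ i j, 0 ≤ P i j) (hcol : ∀ j, ∃ i, 0 < P i j) (u : ι → ℝ)
    (j : κ) : 0 < ∑ i, exp (u i) * P i j := by
  obtain ⟨i, hi⟩ := hcol j
  exact sum_pos' (fun i _ => by have := hP i j; positivity) ⟨i, mem_univ i, by positivity⟩

lemma scalingPotential_le [Fintype κ] {R : ι → κ → ℝ} (hP : ∀ i j, 0 ≤ P i j)
    (hR : ∀ i j, 0 ≤ R i j) (hRP : ∀ i j, R i j ≠ 0 → 0 < P i j)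
    (hRcol : ∀ j, ∑ i, R i j = 1) (u : ι → ℝ) :
    scalingPotential P (fun i => ∑ j, R i j) u ≤ -∑ j, ∑ i, R i j * log (P i j / R i j) := by
  have hcol : ∀ j, ∑ i, R i j * (u i + log (P i j / R i j)) ≤ log (∑ i, exp (u i) * P i j) := by
    intro j
    refine le_of_eq_of_le (sum_congr rfl fun i _ => ?_) (sum_mul_log_div_le_log_sum
      (fun i _ => hR i j) (hRcol j) (fun i _ => by have := hP i j; positivity)
      fun i _ hi => by have := hRP i j hi; positivity)
    rcases eq_or_ne (R i j) 0 with h | h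
    · simp [h]
    · rw [mul_div_assoc, log_mul (exp_ne_zero _) (div_pos (hRP i j h)
        ((hR i j).lt_of_ne' h)).ne', log_exp]
  have hsum : ∑ j, ∑ i, R i j * (u i + log (P i j / R i j)) =
      ∑ i, (∑ j, R i j) * u i + ∑ j, ∑ i, R i j * log (P i j / R i j) := by
    simp_rw [mul_add, sum_add_distrib, sum_mul]
    rw [sum_comm]
  have := sum_le_sum fun j (_ : j ∈ univ) => hcol j
  rw [hsum] at this
  unfold scalingPotential
  linarith

lemma continuous_scalingPotential [Fintype κ] (hP : ∀ i j, 0 ≤ P i j) (hcol : ∀ j, ∃ i, 0 < P i j)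
    (s : ι → ℝ) : Continuous (scalingPotential P s) := by
  unfold scalingPotential
  fun_prop (disch := exact fun u => (sum_exp_mul_pos hP hcol u _).ne')

lemma hasDerivAt_scalingPotential_update [Fintype κ] [DecidableEq ι] (hP : ∀ i j, 0 ≤ P i j)
    (hcol : ∀ j, ∃ i, 0 < P i j) (s w : ι → ℝ) (i : ι) :
    HasDerivAt (fun v => scalingPotential P s (Function.update w i v))
      (s i - ∑ j, exp (w i) * P i j / ∑ i', exp (w i') * P i' j) (w i) := by
  have hupd := hasDerivAt_pi.1 (hasDerivAt_update w i (w i))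
  have hlin := HasDerivAt.fun_sum fun i' (_ : i' ∈ univ) => (hupd i').const_mul (s i')
  have hlog := HasDerivAt.fun_sum fun j (_ : j ∈ univ) =>
    (HasDerivAt.fun_sum fun i' (_ : i' ∈ univ) => (hupd i').exp.mul_const (P i' j)).log
      (by simpa using (sum_exp_mul_pos hP hcol w j).ne')
  have h := hlin.sub hlog
  simp only [Function.update_eq_self, Pi.single_apply, mul_ite, ite_mul, mul_one, mul_zero,
    zero_mul, sum_ite_eq', mem_univ, if_true] at h
  exact h

lemma exists_forall_sub_sum_sq_le {f : (ι → ℝ) → ℝ} {C ε : ℝ} (hf : Continuous f)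
    (hC : ∀ u, f u ≤ C) (hε : 0 < ε) :
    ∃ w, ∀ u, f u - ε * ∑ i, u i ^ 2 ≤ f w - ε * ∑ i, w i ^ 2 := by
  refine (hf.sub (continuous_const.mul (by fun_prop))).exists_forall_ge_of_isBounded 0 ?_
  refine isBounded_iff_forall_norm_le.2 ⟨1 + (C - f 0) / ε, fun u hu => ?_⟩
  replace hu : ε * ∑ i, u i ^ 2 ≤ C - f 0 := by
    have : f 0 ≤ f u - ε * ∑ i, u i ^ 2 := by simpa using hu
    linarith [hC u]
  have hC0 : 0 ≤ C - f 0 := sub_nonneg.2 (hC 0)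
  refine (pi_norm_le_iff_of_nonneg (by positivity)).2 fun i => ?_
  calc ‖u i‖ ≤ 1 + u i ^ 2 := by rw [norm_eq_abs]; nlinarith [abs_nonneg (u i), sq_abs (u i)]
    _ ≤ 1 + ∑ i, u i ^ 2 := by gcongr; exact single_le_sum (fun i _ => sq_nonneg (u i)) (mem_univ i)
    _ ≤ 1 + (C - f 0) / ε := by gcongr; rw [le_div_iff₀ hε]; linarith

lemma eq_two_mul_of_forall_sub_sum_sq_le [DecidableEq ι] {f : (ι → ℝ) → ℝ} {ε g : ℝ}
    {w : ι → ℝ} (hmax : ∀ u, f u - ε * ∑ i, u i ^ 2 ≤ f w - ε * ∑ i, w i ^ 2) {i : ι}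
    (hf : HasDerivAt (fun v => f (Function.update w i v)) g (w i)) : g = 2 * ε * w i := by
  have hupd := hasDerivAt_pi.1 (hasDerivAt_update w i (w i))
  have hpen := HasDerivAt.fun_sum fun i' (_ : i' ∈ univ) => (hupd i').pow 2
  have hmax' : IsLocalMax (fun v => f (Function.update w i v) -
      ε * ∑ i', Function.update w i v i' ^ 2) (w i) :=
    Filter.Eventually.of_forall fun v => by simpa using hmax (Function.update w i v)
  have h := hmax'.hasDerivAt_eq_zero (hf.sub (hpen.const_mul ε))
  simp [Pi.single_apply] at h
  linarith

theorem exists_row_scaling_sum_le_add [Fintype κ] {R : ι → κ → ℝ} (hP : ∀ i j, 0 ≤ P i j)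
    (hR : ∀ i j, 0 ≤ R i j) (hRP : ∀ i j, R i j ≠ 0 → 0 < P i j)
    (hRcol : ∀ j, ∑ i, R i j = 1) {δ : ℝ} (hδ : 0 < δ) :
    ∃ u : ι → ℝ, ∀ i,
      ∑ j, exp (u i) * P i j / ∑ i', exp (u i') * P i' j ≤ ∑ j, R i j + δ := by
  classical
  have hcol := exists_pos_of_sum_eq_one hRP hRcol
  set s := fun i => ∑ j, R i j
  set f := scalingPotential P s
  have hf := scalingPotential_le hP hR hRP hRcol
  set E := -∑ j, ∑ i, R i j * log (P i j / R i j) - f 0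
  have hE : 0 ≤ E := sub_nonneg.2 (hf 0)
  -- small enough that the penalty gradient `2 * ε * w i` at the maximiser is at least `-δ`
  set ε := δ ^ 2 / (4 * (E + 1))
  have hε : 0 < ε := by positivity
  have hεE : 4 * ε * E ≤ δ ^ 2 :=
    calc 4 * ε * E = δ ^ 2 * (E / (E + 1)) := by simp only [ε]; field_simp
      _ ≤ δ ^ 2 :=
        mul_le_of_le_one_right (by positivity) (div_le_one_of_le₀ (by linarith) (by positivity))
  obtain ⟨w, hw⟩ := exists_forall_sub_sum_sq_le (continuous_scalingPotential hP hcol s) hf hε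
  refine ⟨w, fun i => ?_⟩
  have hstat := eq_two_mul_of_forall_sub_sum_sq_le hw
    (hasDerivAt_scalingPotential_update hP hcol s w i)
  have hwi : ε * w i ^ 2 ≤ E := by
    have h0 : f 0 ≤ f w - ε * ∑ i, w i ^ 2 := by simpa using hw 0
    have := single_le_sum (fun i _ => sq_nonneg (w i)) (mem_univ i)
    nlinarith [hf w]
  have : -δ ≤ 2 * ε * w i := (abs_le_of_sq_le_sq' (by nlinarith) hδ.le).1
  linarith
end Scaling

lemma rank_diagonal_mul_mul_diagonal {K ι κ : Type*} [CommRing K] [IsDomain K] [Fintype ι]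
    [DecidableEq ι] [Fintype κ] [DecidableEq κ] {a : ι → K} {b : κ → K} (ha : ∀ i, a i ≠ 0)
    (hb : ∀ j, b j ≠ 0) (A : Matrix ι κ K) : (diagonal a * A * diagonal b).rank = A.rank := by
  rw [rank_mul_eq_left_of_det_ne_zero _ _ (by simpa [prod_ne_zero_iff] using hb),
    rank_mul_eq_right_of_det_ne_zero _ _ (by simpa [prod_ne_zero_iff] using ha)]

section Design
variable {𝕜 ι κ : Type*} [RCLike 𝕜] [Fintype ι] [DecidableEq ι] [Fintype κ] [DecidableEq κ]

theorem exists_scaling_unit_columns {A : Matrix ι κ 𝕜} {R : ι → κ → ℝ}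
    (hR : ∀ i j, 0 ≤ R i j) (hRA : ∀ i j, R i j ≠ 0 → A i j ≠ 0)
    (hRcol : ∀ j, ∑ i, R i j = 1) {δ : ℝ} (hδ : 0 < δ) :
    ∃ B : Matrix ι κ 𝕜, B.rank = A.rank ∧ (∀ i j, B i j ≠ 0 ↔ A i j ≠ 0) ∧
      (∀ j, ∑ i, ‖B i j‖ ^ 2 = 1) ∧ ∀ i, ∑ j, ‖B i j‖ ^ 2 ≤ ∑ j, R i j + δ := by
  set P : ι → κ → ℝ := fun i j => ‖A i j‖ ^ 2
  have hP : ∀ i j, 0 ≤ P i j := fun i j => sq_nonneg _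
  have hRP : ∀ i j, R i j ≠ 0 → 0 < P i j := fun i j h => by
    have := norm_pos_iff.2 (hRA i j h); positivity
  obtain ⟨u, hu⟩ := exists_row_scaling_sum_le_add hP hR hRP hRcol hδ
  set c : κ → ℝ := fun j => ∑ i, exp (u i) * P i j
  have hc : ∀ j, 0 < c j := sum_exp_mul_pos hP (exists_pos_of_sum_eq_one hRP hRcol) u
  set a : ι → 𝕜 := fun i => (√(exp (u i)) : ℝ)
  set b : κ → 𝕜 := fun j => ((√(c j))⁻¹ : ℝ)
  have ha : ∀ i, a i ≠ 0 := fun i => by simp [a, (sqrt_pos.2 (exp_pos (u i))).ne']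
  have hb : ∀ j, b j ≠ 0 := fun j => by simp [b, (sqrt_pos.2 (hc j)).ne']
  have hB : ∀ i j, (diagonal a * A * diagonal b) i j = a i * A i j * b j := fun i j => by
    rw [mul_diagonal, diagonal_mul]
  have hnorm : ∀ i j, ‖(diagonal a * A * diagonal b) i j‖ ^ 2 = exp (u i) * P i j / c j := by
    intro i j
    rw [hB]
    simp only [a, b, norm_mul, RCLike.norm_ofReal, mul_pow, sq_abs, P]
    rw [sq_sqrt (exp_pos _).le, inv_pow, sq_sqrt (hc j).le, div_eq_mul_inv]
  refine ⟨diagonal a * A * diagonal b, rank_diagonal_mul_mul_diagonal ha hb A,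
    fun i j => by simp [hB, ha i, hb j], fun j => ?_, fun i => ?_⟩
  · simp_rw [hnorm, ← sum_div]
    exact div_self (hc j).ne'
  · simp_rw [hnorm]
    exact hu i

theorem card_le_rank_mul_of_sum_le [Nonempty κ] {A : Matrix ι κ 𝕜} {R : ι → κ → ℝ}
    {q t : ℕ} {σ : ℝ} (hrow : ∀ i, #{j | A i j ≠ 0} ≤ q)
    (hinter : ∀ j j', j ≠ j' → #{i | A i j ≠ 0 ∧ A i j' ≠ 0} ≤ t)
    (hR : ∀ i j, 0 ≤ R i j) (hRA : ∀ i j, R i j ≠ 0 → A i j ≠ 0)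
    (hRcol : ∀ j, ∑ i, R i j = 1) (hRrow : ∀ i, ∑ j, R i j ≤ σ) :
    (Fintype.card κ : ℝ) ≤ A.rank * (1 + (q - 1) * t * σ) := by
  have hδ : ∀ δ > 0, (Fintype.card κ : ℝ) ≤ A.rank * (1 + (q - 1) * t * (σ + δ)) := by
    intro δ hδ
    obtain ⟨B, hrank, hsupp, hunit, hrowB⟩ := exists_scaling_unit_columns hR hRA hRcol hδ
    rw [← hrank]
    refine card_le_rank_mul_of_unit_columns (by simpa only [hsupp] using hrow)
      (by simpa only [hsupp] using hinter) hunit fun i j => ?_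
    calc ‖B i j‖ ^ 2 ≤ ∑ j, ‖B i j‖ ^ 2 := single_le_sum (fun j _ => sq_nonneg ‖B i j‖) (mem_univ j)
      _ ≤ σ + δ := (hrowB i).trans (by linarith [hRrow i])
  refine ge_of_tendsto (x := 𝓝[>] 0) ?_ (eventually_nhdsWithin_of_forall hδ)
  exact tendsto_nhdsWithin_of_tendsto_nhds (Continuous.tendsto' (by fun_prop) 0 _ (by simp))
end Design

lemma isDesignMatrix_iff_card {F : Type*} [Field F] [DecidableEq F] {m n : ℕ}
    {A : Matrix (Fin m) (Fin n) F} {q k t : ℕ} :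
    IsDesignMatrix A q k t ↔ (∀ i, #{j | A i j ≠ 0} ≤ q) ∧ (∀ j, k ≤ #{i | A i j ≠ 0}) ∧
      ∀ j₁ j₂, j₁ ≠ j₂ → #{i | A i j₁ ≠ 0 ∧ A i j₂ ≠ 0} ≤ t := by
  simp only [IsDesignMatrix, ← Set.ofPred_and, Set.ncard_eq_toFinset_card', Set.toFinset_ofPred]

lemma natCast_mul_natCast_sub_one_nonneg (q : ℕ) : 0 ≤ (q : ℝ) * (q - 1) := by
  rcases q.eq_zero_or_pos with rfl | hq
  · simp
  · exact mul_nonneg q.cast_nonneg (sub_nonneg.2 (by exact_mod_cast hq))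

theorem IsDesignMatrix.natCast_le_rank_mul {𝕜 : Type*} [RCLike 𝕜] {m n q k t : ℕ}
    {A : Matrix (Fin m) (Fin n) 𝕜} (hA : IsDesignMatrix A q k t) (hk : 0 < k) :
    (n : ℝ) ≤ A.rank * (1 + q * (q - 1) * t / k) := by
  obtain ⟨hrow, hcol, hinter⟩ := isDesignMatrix_iff_card.1 hA
  rcases n.eq_zero_or_pos with rfl | hn
  · have := natCast_mul_natCast_sub_one_nonneg q
    simp only [CharP.cast_eq_zero]
    positivity
  have : Nonempty (Fin n) := ⟨⟨0, hn⟩⟩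
  have hcolpos : ∀ j, (0 : ℝ) < #{i | A i j ≠ 0} := fun j => by
    exact_mod_cast hk.trans_le (hcol j)
  set R : Fin m → Fin n → ℝ := fun i j => if A i j ≠ 0 then (#{i | A i j ≠ 0} : ℝ)⁻¹ else 0
  have hR : ∀ i j, 0 ≤ R i j := fun i j => by
    simp only [R]; split_ifs <;> simp [(hcolpos j).le]
  have hRA : ∀ i j, R i j ≠ 0 → A i j ≠ 0 := fun i j h hA0 => h (by simp [R, hA0])
  have hRcol : ∀ j, ∑ i, R i j = 1 := fun j => by
    rw [sum_ite, sum_const_zero, add_zero, sum_const, nsmul_eq_mul, mul_inv_cancel₀ (hcolpos j).ne']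
  have hRrow : ∀ i, ∑ j, R i j ≤ q / k := fun i => by
    calc ∑ j, R i j = ∑ j with A i j ≠ 0, (#{i | A i j ≠ 0} : ℝ)⁻¹ := by rw [sum_filter]
      _ ≤ ∑ j with A i j ≠ 0, (k : ℝ)⁻¹ :=
          sum_le_sum fun j _ => inv_anti₀ (by exact_mod_cast hk) (by exact_mod_cast hcol j)
      _ ≤ q / k := by
          rw [sum_const, nsmul_eq_mul, div_eq_mul_inv]
          gcongr
          exact_mod_cast hrow i
  have h := card_le_rank_mul_of_sum_le hrow hinter hR hRA hRcol hRrow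
  rw [Fintype.card_fin] at h
  exact h.trans_eq (by ring)

theorem rank_of_design_matrix_no_m {m n q k t : ℕ} (hk : 0 < k)
    (A : Matrix (Fin m) (Fin n) ℂ) (hA : IsDesignMatrix A q k t) :
    (n : ℝ) / (1 + (q : ℝ) * ((q : ℝ) - 1) * (t : ℝ) / (k : ℝ)) ≤ (A.rank : ℝ) ∧
    (n : ℝ) - (n : ℝ) * (t : ℝ) * (q : ℝ) * ((q : ℝ) - 1) / (k : ℝ) ≤ (A.rank : ℝ) := by
  set D : ℝ := q * (q - 1) * t / k
  have hD : 0 ≤ D := by have := natCast_mul_natCast_sub_one_nonneg q; positivity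
  have hrank : n / (1 + D) ≤ (A.rank : ℝ) :=
    (div_le_iff₀ (by positivity)).2 (hA.natCast_le_rank_mul hk)
  refine ⟨hrank, le_trans ?_ hrank⟩
  rw [le_div_iff₀ (by positivity), show (n * t * q * (q - 1) / k : ℝ) = n * D by ring]
  nlinarith [mul_nonneg n.cast_nonneg (sq_nonneg D)]
end

section
/- Let A be an m × n matrix over ℂ that is a (q,k,t)-design matrix. Then there exists an nk × n matrix B, each of whose rows is a row of A and in which each row of A appears at most q times (i.e., B is a q-cover of A), such that B satisfies Property-S. -/
/-- A matrix `M` of dimensions `m × n` satisfies Property-S if for every `a × b`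
all-zero submatrix of `M` it holds that `a/m + b/n ≤ 1`. -/
def PropertyS {F : Type*} [Field F] {m n : ℕ} (M : Matrix (Fin m) (Fin n) F) : Prop :=
  ∀ (I : Finset (Fin m)) (J : Finset (Fin n)),
    (∀ i ∈ I, ∀ j ∈ J, M i j = 0) →
    (I.card : ℝ) / (m : ℝ) + (J.card : ℝ) / (n : ℝ) ≤ 1

open Function Finset

theorem Set.exists_injective_fin_of_le_ncard {α : Type*} {s : Set α} {k : ℕ}
    (h : k ≤ s.ncard) : ∃ f : Fin k → α, Injective f ∧ ∀ i, f i ∈ s := by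
  obtain ⟨t, hts, rfl⟩ := s.exists_subset_card_eq h
  rcases Nat.eq_zero_or_pos t.ncard with h0 | hpos
  · rw [h0]
    exact ⟨Fin.elim0, fun i => i.elim0, fun i => i.elim0⟩
  · have := (Set.finite_of_ncard_pos hpos).to_subtype
    let e := Finite.equivFinOfCardEq (_root_.Nat.card_coe_set_eq t)
    exact ⟨fun i => e.symm i, Subtype.val_injective.comp e.symm.injective,
      fun i => hts (e.symm i).2⟩

theorem Set.ncard_fiber_uncurry_le {ι κ ρ α : Type*} [Finite ι] (g : ι → κ → α)
    (hg : ∀ i, Injective (g i)) (e : ρ ≃ ι × κ) (a : α) :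
    {x | uncurry g (e x) = a}.ncard ≤ {i | a ∈ Set.range (g i)}.ncard := by
  refine Set.ncard_le_ncard_of_injOn (fun x => (e x).1) (fun x hx => ⟨(e x).2, hx⟩) ?_
  intro x hx y hy (hfst : (e x).1 = (e y).1)
  have hsnd : (e x).2 = (e y).2 := hg (e x).1 (by
    change g (e x).1 (e x).2 = a at hx
    change g (e y).1 (e y).2 = a at hy
    rw [hx, hfst, hy])
  exact e.injective (Prod.ext hfst hsnd)

theorem div_mul_add_div_le_one_of_add_mul_le {a b n k : ℕ} (h : a + b * k ≤ n * k) (hb : b ≤ n) :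
    (a : ℝ) / (n * k : ℕ) + (b : ℝ) / n ≤ 1 := by
  rcases Nat.eq_zero_or_pos n with rfl | hn
  · simp
  rcases Nat.eq_zero_or_pos k with rfl | hk
  · obtain rfl : a = 0 := by simpa using h
    simpa using div_le_one_of_le₀ (Nat.cast_le.mpr hb) (Nat.cast_nonneg n)
  have hnk : (0 : ℝ) < n * k := by positivity
  rw [show (b : ℝ) / n = b * k / (n * k) by field_simp, Nat.cast_mul, ← add_div,
    div_le_one hnk]
  exact_mod_cast h

theorem propertyS_of_injective_nonzero {F : Type*} [Field F] {n k : ℕ}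
    {B : Matrix (Fin (n * k)) (Fin n) F} {φ : Fin n × Fin k → Fin (n * k)}
    (hφ : Injective φ) (hB : ∀ j s, B (φ (j, s)) j ≠ 0) : PropertyS B := by
  intro I J hIJ
  have hdisj : Disjoint I ((J ×ˢ univ).map ⟨φ, hφ⟩) := by
    rw [disjoint_right]
    simp only [mem_map, mem_product, mem_univ, and_true, Embedding.coeFn_mk]
    rintro _ ⟨⟨j, s⟩, hj, rfl⟩ hI
    exact hB j s (hIJ _ hI j hj)
  have hcard : #I + #J * k ≤ n * k := by
    simpa [card_union_of_disjoint hdisj] using card_le_univ (I ∪ (J ×ˢ univ).map ⟨φ, hφ⟩)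
  exact div_mul_add_div_le_one_of_add_mul_le hcard (by simpa using card_le_univ J)

theorem q_cover_exists {m n q k t : ℕ} (A : Matrix (Fin m) (Fin n) ℂ)
    (hA : IsDesignMatrix A q k t) :
    ∃ (B : Matrix (Fin (n * k)) (Fin n) ℂ) (r : Fin (n * k) → Fin m),
      (∀ i, B i = A (r i)) ∧
      (∀ i' : Fin m, ({i : Fin (n * k) | r i = i'}).ncard ≤ q) ∧
      PropertyS B := by
  obtain ⟨hrow, hcol, -⟩ := hA
  choose g hg_inj hg_supp using fun j => Set.exists_injective_fin_of_le_ncard (hcol j)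
  let r : Fin (n * k) → Fin m := uncurry g ∘ finProdFinEquiv.symm
  refine ⟨A.submatrix r id, r, fun _ => rfl, fun a => ?_, ?_⟩
  · calc {i | r i = a}.ncard ≤ {j | a ∈ Set.range (g j)}.ncard :=
          Set.ncard_fiber_uncurry_le g hg_inj finProdFinEquiv.symm a
      _ ≤ {j | A a j ≠ 0}.ncard := Set.ncard_le_ncard (by rintro j ⟨s, rfl⟩; exact hg_supp j s)
      _ ≤ q := hrow a
  · exact propertyS_of_injective_nonzero finProdFinEquiv.injective
      (fun j s => by simpa [r] using hg_supp j s)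
end

section
/- Let A be an m × n matrix over ℂ that is a (q,k,t)-design matrix with k ≤ nt. Then there exists an nk × n matrix B, each of whose rows is a row of A and in which each row of A appears at most 6nt/k times (i.e., B is a (6nt/k)-cover of A), such that B satisfies Property-S. -/
open Finset

lemma peel_lemma {m n k t : ℕ} (col : Fin n → Finset (Fin m))
    (hk : ∀ j, k ≤ (col j).card)
    (ht : ∀ j₁ j₂ : Fin n, j₁ ≠ j₂ → ((col j₁) ∩ (col j₂)).card ≤ t) :
    ∀ J : Finset (Fin n),
      2 * (k * J.card) ≤ 2 * (J.biUnion col).card + t * (J.card * (J.card - 1)) := by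
  intro J
  induction J using Finset.induction_on with
  | empty => simp
  | @insert j J hj ih =>
    have hcardins : (insert j J).card = J.card + 1 := Finset.card_insert_of_notMem hj
    set U := J.biUnion col with hU
    -- |col j ∩ U| ≤ t * |J|
    have hsub : col j ∩ U ⊆ J.biUnion (fun j' => col j ∩ col j') := by
      intro x hx
      rw [Finset.mem_inter, hU, Finset.mem_biUnion] at hx
      obtain ⟨j', hj', hx2⟩ := hx.2
      exact Finset.mem_biUnion.mpr ⟨j', hj', Finset.mem_inter.mpr ⟨hx.1, hx2⟩⟩
    have hinter : (col j ∩ U).card ≤ t * J.card := by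
      calc (col j ∩ U).card ≤ (J.biUnion (fun j' => col j ∩ col j')).card :=
            Finset.card_le_card hsub
        _ ≤ ∑ j' ∈ J, (col j ∩ col j').card := Finset.card_biUnion_le
        _ ≤ ∑ _j' ∈ J, t := by
            apply Finset.sum_le_sum
            intro j' hj'
            exact ht j j' (by rintro rfl; exact hj hj')
        _ = t * J.card := by rw [Finset.sum_const, smul_eq_mul, mul_comm]
    -- k ≤ |col j \ U| + t * |J|
    have hnew : k ≤ (col j \ U).card + t * J.card := by
      have h1 : (col j).card ≤ (col j \ U).card + (col j ∩ U).card := by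
        rw [Finset.card_sdiff_add_card_inter]
      have := hk j
      omega
    -- cardinality of new union
    have hUnion : ((insert j J).biUnion col).card = U.card + (col j \ U).card := by
      rw [Finset.biUnion_insert]
      rw [← Finset.card_sdiff_add_card (col j) U, add_comm]
    have hsq : t * (#J * (#J - 1)) + 2 * (t * #J) = t * ((#J + 1) * (#J + 1 - 1)) := by
      rcases Nat.eq_zero_or_pos #J with h | h
      · simp [h]
      · obtain ⟨d, hd⟩ := Nat.exists_eq_add_of_lt h
        rw [hd]
        simp only [Nat.add_sub_cancel]
        ring
    rw [hcardins, hUnion]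
    nlinarith [ih, hnew]

lemma core_lemma {m n k t : ℕ} (hk1 : 1 ≤ k) (ht1 : 1 ≤ t) (hkt : k ≤ n * t)
    (col : Fin n → Finset (Fin m))
    (hk : ∀ j, k ≤ (col j).card)
    (ht : ∀ j₁ j₂ : Fin n, j₁ ≠ j₂ → ((col j₁) ∩ (col j₂)).card ≤ t)
    (J : Finset (Fin n)) (hJ : J.Nonempty) :
    k * J.card ≤ (4 * n * t / k + 1) * (J.biUnion col).card := by
  set c := 4 * n * t / k + 1 with hc
  set s := J.card with hs
  set u := (J.biUnion col).card with hu
  have hn : 1 ≤ n := by nlinarith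
  have hsn : s ≤ n := by
    calc s ≤ Fintype.card (Fin n) := Finset.card_le_univ J
      _ = n := Fintype.card_fin n
  have huk : k ≤ u := by
    obtain ⟨j, hj⟩ := hJ
    calc k ≤ (col j).card := hk j
      _ ≤ u := Finset.card_le_card (Finset.subset_biUnion_of_mem col hj)
  have hck : 4 * n * t < c * k := by
    have h1 : 4 * n * t % k < k := Nat.mod_lt _ hk1
    have h2 : 4 * n * t / k * k + 4 * n * t % k = 4 * n * t := Nat.div_add_mod' (4 * n * t) k
    calc 4 * n * t = 4 * n * t / k * k + 4 * n * t % k := h2.symm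
      _ < 4 * n * t / k * k + k := by omega
      _ = c * k := by rw [hc]; ring
  by_cases hcase : s ≤ c
  · calc k * s ≤ k * c := Nat.mul_le_mul_left k hcase
      _ = c * k := mul_comm _ _
      _ ≤ c * u := Nat.mul_le_mul_left c huk
  · push_neg at hcase
    have hs1 : 1 ≤ s := hJ.card_pos
    have hks : 4 * n * t < k * s := by
      have : c + 1 ≤ s := hcase
      nlinarith
    have hk4t : 4 * t < k := by nlinarith
    by_cases hts : t * s ≤ k
    · -- small case: k*s ≤ 2*u
      have hpeel := peel_lemma col hk ht J
      rw [← hs, ← hu] at hpeel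
      have h1 : t * (s * (s - 1)) ≤ k * s := by
        calc t * (s * (s - 1)) ≤ t * (s * s) := by
              apply Nat.mul_le_mul_left
              exact Nat.mul_le_mul_left s (Nat.sub_le s 1)
          _ = (t * s) * s := by ring
          _ ≤ k * s := Nat.mul_le_mul_right s hts
      have h2 : k * s ≤ 2 * u := by omega
      have hc2 : 2 ≤ c := by
        have : 1 ≤ 4 * n * t / k := Nat.one_le_div_iff hk1 |>.mpr (by nlinarith)
        omega
      calc k * s ≤ 2 * u := h2
        _ ≤ c * u := Nat.mul_le_mul_right u hc2
    · push_neg at hts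
      set p := k / t with hp
      have htp : t * p ≤ k := by
        rw [hp, mul_comm]; exact Nat.div_mul_le_self k t
      have hktp : k < t * (p + 1) := by
        have h1 : k % t < t := Nat.mod_lt _ ht1
        have h2 : k / t * t + k % t = k := Nat.div_add_mod' k t
        calc k = k / t * t + k % t := h2.symm
          _ < k / t * t + t := by omega
          _ = t * (p + 1) := by rw [hp]; ring
      have hps : p < s := by
        rcases lt_or_ge p s with h | h
        · exact h
        · exact absurd (le_trans (Nat.mul_le_mul_left t h) htp) (not_le.mpr hts)
      obtain ⟨J', hJ'sub, hJ'card⟩ := Finset.exists_subset_card_eq (le_of_lt hps)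
      have hpeel := peel_lemma col hk ht J'
      rw [hJ'card] at hpeel
      have hu'u : (J'.biUnion col).card ≤ u := by
        rw [hu]
        exact Finset.card_le_card (Finset.biUnion_subset_biUnion_of_subset_left col hJ'sub)
      have h1 : t * (p * (p - 1)) ≤ k * p := by
        calc t * (p * (p - 1)) ≤ t * (p * p) := by
              exact Nat.mul_le_mul_left t (Nat.mul_le_mul_left p (Nat.sub_le p 1))
          _ = (t * p) * p := by ring
          _ ≤ k * p := Nat.mul_le_mul_right p htp
      have hkp2u : k * p ≤ 2 * u := by omega
      -- key: 2 * n ≤ c * p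
      have hq0t : (4 * n * t / k) * t ≤ n * t := by
        have h4 : 4 * n * t / k * k ≤ 4 * n * t := Nat.div_mul_le_self _ _
        have h5 : (4 * n * t / k) * (4 * t) ≤ (4 * n * t / k) * k :=
          Nat.mul_le_mul_left _ hk4t.le
        have h6 : 4 * ((4 * n * t / k) * t) = (4 * n * t / k) * (4 * t) := by ring
        have h7 : 4 * n * t = 4 * (n * t) := by ring
        omega
      have hcp : 2 * n * t ≤ c * (t * p) := by
        have h6 : c * (k + 1) ≤ c * (t * (p + 1)) := Nat.mul_le_mul_left c hktp
        have h7 : c * (t - 1) ≤ 2 * n * t + 1 := by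
          have ht' : t - 1 + 1 = t := Nat.succ_pred_eq_of_pos ht1
          have ha : c * (t - 1) = (4 * n * t / k) * (t - 1) + (t - 1) := by rw [hc]; ring
          have h8 : (4 * n * t / k) * (t - 1) ≤ (4 * n * t / k) * t :=
            Nat.mul_le_mul_left _ (Nat.sub_le t 1)
          have h9 : t ≤ n * t := by
            calc t = 1 * t := (one_mul t).symm
              _ ≤ n * t := Nat.mul_le_mul_right t hn
          have h9b : 2 * n * t = 2 * (n * t) := by ring
          omega
        have h10 : c * (t * (p + 1)) = c * (t * p) + c * t := by ring
        have h11 : c * (k + 1) = c * k + c := by ring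
        have h12 : c * t = c * (t - 1) + c := by
          have ht' : t - 1 + 1 = t := Nat.succ_pred_eq_of_pos ht1
          calc c * t = c * ((t - 1) + 1) := by rw [ht']
            _ = c * (t - 1) + c := by ring
        have h18 : 4 * n * t = 2 * (2 * n * t) := by ring
        omega
      have h2np : 2 * n ≤ c * p := by
        rcases le_or_gt (2 * n) (c * p) with h | h
        · exact h
        · exfalso
          have h13 : t * (c * p) + t ≤ t * (2 * n) := by
            have h14 := Nat.mul_le_mul_left t (show c * p + 1 ≤ 2 * n by omega)
            calc t * (c * p) + t = t * (c * p + 1) := by ring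
              _ ≤ t * (2 * n) := h14
          have h15 : c * (t * p) = t * (c * p) := by ring
          have h16 : t * (2 * n) = 2 * n * t := by ring
          omega
      have hfin : 2 * (k * s) ≤ 2 * (c * u) := by
        calc 2 * (k * s) = k * (2 * s) := by ring
          _ ≤ k * (2 * n) := Nat.mul_le_mul_left k (by omega)
          _ ≤ k * (c * p) := Nat.mul_le_mul_left k h2np
          _ = c * (k * p) := by ring
          _ ≤ c * (2 * u) := Nat.mul_le_mul_left c hkp2u
          _ = 2 * (c * u) := by ring
      omega



theorem ntk_cover_exists {m n q k t : ℕ} (A : Matrix (Fin m) (Fin n) ℂ)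
    (hA : IsDesignMatrix A q k t) (hkt : k ≤ n * t) :
    ∃ (B : Matrix (Fin (n * k)) (Fin n) ℂ) (r : Fin (n * k) → Fin m),
      (∀ i, B i = A (r i)) ∧
      (∀ i' : Fin m, (({i : Fin (n * k) | r i = i'}).ncard : ℝ) ≤ 6 * n * t / k) ∧
      PropertyS B := by
  classical
  by_cases h0 : n * k = 0
  · -- degenerate case
    haveI hemp : IsEmpty (Fin (n * k)) := ⟨fun i => absurd i.isLt (by omega)⟩
    refine ⟨fun i j => 0, fun i => hemp.elim i, fun i => hemp.elim i, ?_, ?_⟩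
    · intro i'
      have h1 : {i : Fin (n * k) | hemp.elim i = i'} = ∅ := Set.eq_empty_of_isEmpty _
      rw [h1, Set.ncard_empty]
      simp only [Nat.cast_zero]
      positivity
    · intro I J _
      have hI : I = ∅ := Finset.eq_empty_of_isEmpty I
      have hJ : (J.card : ℝ) / (n : ℝ) ≤ 1 := by
        rcases Nat.eq_zero_or_pos n with hn | hn
        · haveI : IsEmpty (Fin n) := ⟨fun i => absurd i.isLt (by omega)⟩
          rw [Finset.eq_empty_of_isEmpty J]
          simp
        · apply div_le_one_of_le₀
          · exact_mod_cast (Finset.card_le_univ J).trans_eq (by simp)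
          · positivity
      rw [hI]
      simp only [Finset.card_empty, Nat.cast_zero, zero_div, zero_add]
      exact hJ
  · -- main case
    obtain ⟨hn0', hk0'⟩ := Nat.mul_ne_zero_iff.mp h0
    have hn : 1 ≤ n := Nat.pos_of_ne_zero hn0'
    have hk1 : 1 ≤ k := Nat.pos_of_ne_zero hk0'
    have ht1 : 1 ≤ t := by nlinarith
    set col : Fin n → Finset (Fin m) := fun j => Finset.univ.filter (fun i => A i j ≠ 0)
      with hcol
    have hcolset : ∀ j, {i : Fin m | A i j ≠ 0} = ↑(col j) := by
      intro j; ext i; simp [hcol]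
    have hkcol : ∀ j, k ≤ (col j).card := by
      intro j
      have := hA.2.1 j
      rwa [hcolset j, Set.ncard_coe_finset] at this
    have htcol : ∀ j₁ j₂ : Fin n, j₁ ≠ j₂ → ((col j₁) ∩ (col j₂)).card ≤ t := by
      intro j₁ j₂ hne
      have := hA.2.2 j₁ j₂ hne
      rw [hcolset j₁, hcolset j₂, ← Finset.coe_inter, Set.ncard_coe_finset] at this
      exact this
    set c := 4 * n * t / k + 1 with hc
    -- Hall's condition
    set fam : (Fin n × Fin k) → Finset (Fin m × Fin c) :=
      fun jl => (col jl.1) ×ˢ (Finset.univ : Finset (Fin c)) with hfam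
    have hall : ∀ S : Finset (Fin n × Fin k), S.card ≤ (S.biUnion fam).card := by
      intro S
      rcases S.eq_empty_or_nonempty with rfl | hS
      · simp
      set J := S.image Prod.fst with hJ
      have hJne : J.Nonempty := hS.image _
      have h1 : S.card ≤ J.card * k := by
        calc S.card ≤ (J ×ˢ (Finset.univ : Finset (Fin k))).card := by
              apply Finset.card_le_card
              intro x hx
              exact Finset.mem_product.mpr ⟨Finset.mem_image_of_mem _ hx, Finset.mem_univ _⟩
          _ = J.card * k := by
              rw [Finset.card_product, Finset.card_univ, Fintype.card_fin]
      have h2 : (J.biUnion col) ×ˢ (Finset.univ : Finset (Fin c)) ⊆ S.biUnion fam := by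
        intro x hx
        rw [Finset.mem_product] at hx
        obtain ⟨j, hjJ, hxj⟩ := Finset.mem_biUnion.mp hx.1
        obtain ⟨sl, hsl, rfl⟩ := Finset.mem_image.mp hjJ
        exact Finset.mem_biUnion.mpr
          ⟨sl, hsl, Finset.mem_product.mpr ⟨hxj, Finset.mem_univ _⟩⟩
      have h3 : (J.biUnion col).card * c ≤ (S.biUnion fam).card := by
        calc (J.biUnion col).card * c
            = ((J.biUnion col) ×ˢ (Finset.univ : Finset (Fin c))).card := by
              rw [Finset.card_product, Finset.card_univ, Fintype.card_fin]
          _ ≤ (S.biUnion fam).card := Finset.card_le_card h2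
      have h4 := core_lemma hk1 ht1 hkt col hkcol htcol J hJne
      calc S.card ≤ J.card * k := h1
        _ = k * J.card := mul_comm _ _
        _ ≤ c * (J.biUnion col).card := h4
        _ = (J.biUnion col).card * c := mul_comm _ _
        _ ≤ (S.biUnion fam).card := h3
    obtain ⟨f, hfinj, hfmem⟩ :=
      (Finset.all_card_le_biUnion_card_iff_exists_injective fam).mp hall
    set e : Fin (n * k) → Fin n × Fin k := fun i => finProdFinEquiv.symm i with he
    have heinj : Function.Injective e := finProdFinEquiv.symm.injective
    set rfun : Fin (n * k) → Fin m := fun i => (f (e i)).1 with hrfun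
    have hmem : ∀ i : Fin (n * k), (f (e i)).1 ∈ col (e i).1 := by
      intro i
      have := hfmem (e i)
      rw [hfam, Finset.mem_product] at this
      exact this.1
    refine ⟨fun i j => A (rfun i) j, rfun, fun i => rfl, ?_, ?_⟩
    · -- multiplicity bound
      intro i'
      have hsub : {i : Fin (n * k) | rfun i = i'}.ncard ≤ c := by
        have hinj : Set.InjOn (fun i => (f (e i)).2) {i | rfun i = i'} := by
          intro a ha b hb hab
          simp only [Set.mem_setOf_eq, hrfun] at ha hb
          have h1 : f (e a) = f (e b) := Prod.ext (ha.trans hb.symm) hab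
          exact heinj (hfinj h1)
        calc {i : Fin (n * k) | rfun i = i'}.ncard
            ≤ (Set.univ : Set (Fin c)).ncard :=
              Set.ncard_le_ncard_of_injOn (fun i => (f (e i)).2)
                (fun a _ => Set.mem_univ _) hinj Set.finite_univ
          _ = c := by rw [Set.ncard_univ, Nat.card_eq_fintype_card, Fintype.card_fin]
      have hkpos : (0 : ℝ) < k := by exact_mod_cast hk1
      have hcr : (c : ℝ) ≤ 6 * n * t / k := by
        have h1 : ((4 * n * t / k : ℕ) : ℝ) ≤ (4 * n * t : ℕ) / (k : ℝ) := Nat.cast_div_le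
        have h2 : (1 : ℝ) ≤ 2 * n * t / k := by
          rw [le_div_iff₀ hkpos]
          have : (k : ℝ) ≤ n * t := by exact_mod_cast hkt
          nlinarith
        have h3 : (c : ℝ) = ((4 * n * t / k : ℕ) : ℝ) + 1 := by
          rw [hc]; push_cast; ring
        rw [h3]
        push_cast at h1
        have h4 : 4 * (n : ℝ) * t / k + 2 * n * t / k = 6 * n * t / k := by
          field_simp; ring
        linarith
      calc (({i : Fin (n * k) | rfun i = i'}).ncard : ℝ) ≤ (c : ℝ) := by exact_mod_cast hsub
        _ ≤ 6 * n * t / k := hcr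
    · -- Property S
      intro I J hz
      have hIJ : ∀ i ∈ I, (e i).1 ∉ J := by
        intro i hi hmemJ
        have hval : A ((f (e i)).1) ((e i).1) ≠ 0 := by
          have := hmem i
          rw [hcol] at this
          simpa using (Finset.mem_filter.mp this).2
        exact hval (hz i hi (e i).1 hmemJ)
      have hJn : J.card ≤ n := (Finset.card_le_univ J).trans_eq (by simp)
      have hIcard : I.card ≤ (n - J.card) * k := by
        calc I.card ≤ (Jᶜ ×ˢ (Finset.univ : Finset (Fin k))).card := by
              apply Finset.card_le_card_of_injOn e
              · intro i hi
                exact Finset.mem_product.mpr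
                  ⟨Finset.mem_compl.mpr (hIJ i hi), Finset.mem_univ _⟩
              · exact heinj.injOn
          _ = (n - J.card) * k := by
              rw [Finset.card_product, Finset.card_compl, Finset.card_univ,
                Fintype.card_fin, Fintype.card_fin]
      have hnkpos : (0 : ℝ) < ((n * k : ℕ) : ℝ) := by
        have : 1 ≤ n * k := Nat.pos_of_ne_zero h0
        exact_mod_cast this
      have hnpos : (0 : ℝ) < (n : ℝ) := by exact_mod_cast hn
      have h1 : (I.card : ℝ) ≤ ((n : ℝ) - J.card) * k := by
        have := hIcard
        have h2 : ((n - J.card) * k : ℕ) = ((n : ℝ) - J.card) * k := by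
          push_cast [hJn]; ring
        calc (I.card : ℝ) ≤ (((n - J.card) * k : ℕ) : ℝ) := by exact_mod_cast this
          _ = ((n : ℝ) - J.card) * k := h2
      have h5 : (I.card : ℝ) / ((n * k : ℕ) : ℝ) ≤ 1 - (J.card : ℝ) / n := by
        rw [div_le_iff₀ hnkpos]
        have h6 : (1 - (J.card : ℝ) / n) * ((n * k : ℕ) : ℝ) = ((n : ℝ) - J.card) * k := by
          push_cast
          field_simp
        rw [h6]
        exact h1
      linarith [h5]
end

section
/- Let A be an m × n matrix over ℂ, and suppose there exists an nk × n matrix B that is a c-cover of A and satisfies Property-S. Then for every ε > 0 there exists a scaling A′ of A (i.e., A′_{ij} = ρ_i γ_j A_{ij} for some nonzero scalars ρ₁,…,ρ_m and γ₁,…,γ_n) such that every row of A′ has ℓ₂ norm at most √(1+ε) and every column of A′ has ℓ₂ norm at least √((k−ε)/c). -/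
lemma core_sq {ψ θ : ℝ} (hψ : 0 < ψ) (h : ψ - 1 - Real.log ψ ≤ θ) :
    (Real.sqrt ψ - 1)^2 ≤ θ := by
  have hlog : Real.log ψ ≤ 2 * (Real.sqrt ψ - 1) := by
    have h1 : Real.log (Real.sqrt ψ) ≤ Real.sqrt ψ - 1 :=
      Real.log_le_sub_one_of_pos (Real.sqrt_pos.mpr hψ)
    have h2 : Real.log (Real.sqrt ψ) = Real.log ψ / 2 := Real.log_sqrt hψ.le
    linarith
  have hsq : Real.sqrt ψ ^ 2 = ψ := Real.sq_sqrt hψ.le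
  nlinarith [Real.sqrt_nonneg ψ]

lemma upper_bd {ψ θ : ℝ} (hψ : 0 < ψ) (hθ : 0 ≤ θ) (h : ψ - 1 - Real.log ψ ≤ θ) :
    ψ ≤ (1 + Real.sqrt θ)^2 := by
  have h1 := core_sq hψ h
  have h2 : Real.sqrt θ ^ 2 = θ := Real.sq_sqrt hθ
  have hsq : Real.sqrt ψ ^ 2 = ψ := Real.sq_sqrt hψ.le
  nlinarith [Real.sqrt_nonneg ψ, Real.sqrt_nonneg θ]

lemma lower_bd {ψ θ : ℝ} (hψ : 0 < ψ) (hθ : 0 ≤ θ) (h : ψ - 1 - Real.log ψ ≤ θ) :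
    1 - 2 * Real.sqrt θ ≤ ψ := by
  have h1 := core_sq hψ h
  have h2 : Real.sqrt θ ^ 2 = θ := Real.sq_sqrt hθ
  have hsq : Real.sqrt ψ ^ 2 = ψ := Real.sq_sqrt hψ.le
  nlinarith [Real.sqrt_nonneg ψ, Real.sqrt_nonneg θ]

lemma sum_update_eq {p : ℕ} (g : Fin p → ℝ → ℝ) (u : Fin p → ℝ) (i₀ : Fin p) (a : ℝ) :
    ∑ i, g i (Function.update u i₀ a i) =
      (∑ i, g i (u i)) + (g i₀ a - g i₀ (u i₀)) := by
  classical
  have h1 : ∑ i ∈ Finset.univ.erase i₀, g i (Function.update u i₀ a i)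
      = ∑ i ∈ Finset.univ.erase i₀, g i (u i) := by
    apply Finset.sum_congr rfl
    intro i hi
    rw [Function.update_of_ne (Finset.ne_of_mem_erase hi)]
  have h2 := Finset.sum_erase_add Finset.univ (fun i => g i (Function.update u i₀ a i))
      (Finset.mem_univ i₀)
  have h3 := Finset.sum_erase_add Finset.univ (fun i => g i (u i)) (Finset.mem_univ i₀)
  simp only [Function.update_self] at h2
  linarith [h2, h3, h1]

lemma scaling_exists {M n k : ℕ} (hk : 0 < k) (N : Fin M → Fin n → ℝ)
    (hN : ∀ i j, 0 ≤ N i j) (fb : Fin M → Fin n × Fin k) (hbij : Function.Bijective fb)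
    (hw : ∀ i, 0 < N i (fb i).1) (η : ℝ) (hη : 0 < η) :
    ∃ (u : Fin M → ℝ) (v : Fin n → ℝ),
      (∀ i, Real.exp (u i) * ∑ j, N i j * Real.exp (v j) ≤ (1 + Real.sqrt η)^2) ∧
      (∀ j, (k:ℝ) - 2 * Real.sqrt (η * k) ≤
        Real.exp (v j) * ∑ i, N i j * Real.exp (u i)) := by
  classical
  set f : (Fin M → ℝ) → (Fin n → ℝ) → ℝ := fun u v =>
    (∑ i, ∑ j, N i j * Real.exp (u i + v j)) - (∑ i, u i) - k * ∑ j, v j with hf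
  -- row form
  have frow : ∀ u v, f u v =
      (∑ i, Real.exp (u i) * ∑ j, N i j * Real.exp (v j)) - (∑ i, u i) - k * ∑ j, v j := by
    intro u v
    simp only [hf]
    congr 1
    congr 1
    apply Finset.sum_congr rfl
    intro i _
    rw [Finset.mul_sum]
    apply Finset.sum_congr rfl
    intro j _
    rw [Real.exp_add]; ring
  -- column form
  have fcol : ∀ u v, f u v =
      (∑ j, Real.exp (v j) * ∑ i, N i j * Real.exp (u i)) - (∑ i, u i) - k * ∑ j, v j := by
    intro u v
    simp only [hf]
    congr 1
    congr 1
    rw [Finset.sum_comm]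
    apply Finset.sum_congr rfl
    intro j _
    rw [Finset.mul_sum]
    apply Finset.sum_congr rfl
    intro i _
    rw [Real.exp_add]; ring
  -- counting identity
  have hcount : ∀ v : Fin n → ℝ, ∑ i, v (fb i).1 = k * ∑ j, v j := by
    intro v
    have h1 : ∑ i, v (fb i).1 = ∑ p : Fin n × Fin k, v p.1 :=
      hbij.sum_comp (fun p : Fin n × Fin k => v p.1)
    rw [h1, Fintype.sum_prod_type]
    simp only [Finset.sum_const, Finset.card_univ, Fintype.card_fin, smul_eq_mul]
    rw [Finset.mul_sum]
    apply Finset.sum_congr rfl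
    intros; ring
  -- bounded below
  have hbdd : ∀ u v, (∑ i, (1 + Real.log (N i (fb i).1))) ≤ f u v := by
    intro u v
    have h1 : ∑ i, N i (fb i).1 * Real.exp (u i + v (fb i).1) ≤
        ∑ i, ∑ j, N i j * Real.exp (u i + v j) := by
      apply Finset.sum_le_sum
      intro i _
      exact Finset.single_le_sum (f := fun j => N i j * Real.exp (u i + v j))
        (fun j _ => mul_nonneg (hN i j) (Real.exp_pos _).le) (Finset.mem_univ (fb i).1)
    have h2 : ∀ i : Fin M, 1 + Real.log (N i (fb i).1) + (u i + v (fb i).1) ≤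
        N i (fb i).1 * Real.exp (u i + v (fb i).1) := by
      intro i
      have := Real.add_one_le_exp (Real.log (N i (fb i).1) + (u i + v (fb i).1))
      rw [Real.exp_add, Real.exp_log (hw i)] at this
      linarith
    have h3 : ∑ i, (1 + Real.log (N i (fb i).1) + (u i + v (fb i).1)) ≤
        ∑ i, N i (fb i).1 * Real.exp (u i + v (fb i).1) :=
      Finset.sum_le_sum fun i _ => h2 i
    have h4 : ∑ i, (1 + Real.log (N i (fb i).1) + (u i + v (fb i).1)) =
        (∑ i, (1 + Real.log (N i (fb i).1))) + (∑ i, u i) + ∑ i, v (fb i).1 := by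
      rw [← Finset.sum_add_distrib, ← Finset.sum_add_distrib]
      apply Finset.sum_congr rfl
      intros; ring
    rw [hcount] at h4
    simp only [hf]
    linarith
  -- near-infimum point
  set S : Set ℝ := Set.range (fun z : (Fin M → ℝ) × (Fin n → ℝ) => f z.1 z.2) with hS
  have hne : S.Nonempty := ⟨f 0 0, ⟨(0, 0), rfl⟩⟩
  have hbb : BddBelow S := by
    refine ⟨∑ i, (1 + Real.log (N i (fb i).1)), ?_⟩
    rintro x ⟨z, rfl⟩
    exact hbdd z.1 z.2
  obtain ⟨x, hxS, hxlt⟩ := exists_lt_of_csInf_lt hne (lt_add_of_pos_right (sInf S) hη)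
  obtain ⟨z, rfl⟩ := hxS
  obtain ⟨u, v⟩ := z
  have hmin : ∀ u' v', f u v < f u' v' + η := by
    intro u' v'
    have : sInf S ≤ f u' v' := csInf_le hbb ⟨(u', v'), rfl⟩
    dsimp at hxlt
    linarith
  refine ⟨u, v, ?_, ?_⟩
  · -- rows
    intro i₀
    set R : ℝ := ∑ j, N i₀ j * Real.exp (v j) with hR
    have hRpos : 0 < R :=
      lt_of_lt_of_le (mul_pos (hw i₀) (Real.exp_pos _))
        (Finset.single_le_sum (f := fun j => N i₀ j * Real.exp (v j))
          (fun j _ => mul_nonneg (hN i₀ j) (Real.exp_pos _).le) (Finset.mem_univ (fb i₀).1))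
    set ρ : ℝ := Real.exp (u i₀) * R with hρ
    have hρpos : 0 < ρ := mul_pos (Real.exp_pos _) hRpos
    set t : ℝ := -Real.log ρ with ht
    have het : Real.exp t = ρ⁻¹ := by
      rw [ht, Real.exp_neg, Real.exp_log hρpos]
    have hstep : f (Function.update u i₀ (u i₀ + t)) v - f u v
        = Real.exp (u i₀ + t) * R - Real.exp (u i₀) * R - t := by
      have e1 := sum_update_eq (fun i x => Real.exp x * ∑ j, N i j * Real.exp (v j)) u i₀
        (u i₀ + t)
      have e2 := sum_update_eq (fun _ x => x) u i₀ (u i₀ + t)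
      rw [frow, frow, e1, e2]; ring
    have hA : Real.exp (u i₀ + t) * R = 1 := by
      calc Real.exp (u i₀ + t) * R = (Real.exp (u i₀) * R) * Real.exp t := by
            rw [Real.exp_add]; ring
        _ = ρ * ρ⁻¹ := by rw [← hρ, het]
        _ = 1 := mul_inv_cancel₀ (ne_of_gt hρpos)
    have hdiff : f (Function.update u i₀ (u i₀ + t)) v - f u v = 1 - ρ + Real.log ρ := by
      rw [hstep, hA, ht]
      have hB : Real.exp (u i₀) * R = ρ := hρ.symm
      linarith
    have := hmin (Function.update u i₀ (u i₀ + t)) v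
    have hkey : ρ - 1 - Real.log ρ ≤ η := by linarith
    exact upper_bd hρpos hη.le hkey
  · -- columns
    intro j₀
    set C : ℝ := ∑ i, N i j₀ * Real.exp (u i) with hC
    obtain ⟨i₁, hi₁⟩ := hbij.2 (j₀, ⟨0, hk⟩)
    have hNi₁ : 0 < N i₁ j₀ := by
      have := hw i₁
      rw [hi₁] at this
      exact this
    have hCpos : 0 < C :=
      lt_of_lt_of_le (mul_pos hNi₁ (Real.exp_pos _))
        (Finset.single_le_sum (f := fun i => N i j₀ * Real.exp (u i))
          (fun i _ => mul_nonneg (hN i j₀) (Real.exp_pos _).le) (Finset.mem_univ i₁))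
    set cj : ℝ := Real.exp (v j₀) * C with hcj
    have hcjpos : 0 < cj := mul_pos (Real.exp_pos _) hCpos
    set t : ℝ := Real.log k - Real.log cj with ht
    have hkR : (0:ℝ) < k := by exact_mod_cast hk
    have het : Real.exp t = k / cj := by
      rw [ht, Real.exp_sub, Real.exp_log hcjpos, Real.exp_log hkR]
    have hstep : f u (Function.update v j₀ (v j₀ + t)) - f u v
        = Real.exp (v j₀ + t) * C - Real.exp (v j₀) * C - k * t := by
      have e1 := sum_update_eq (fun j x => Real.exp x * ∑ i, N i j * Real.exp (u i)) v j₀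
        (v j₀ + t)
      have e2 := sum_update_eq (fun _ x => x) v j₀ (v j₀ + t)
      rw [fcol, fcol, e1, e2]; ring
    have hA : Real.exp (v j₀ + t) * C = k := by
      calc Real.exp (v j₀ + t) * C = (Real.exp (v j₀) * C) * Real.exp t := by
            rw [Real.exp_add]; ring
        _ = cj * (k / cj) := by rw [← hcj, het]
        _ = k := mul_div_cancel₀ _ (ne_of_gt hcjpos)
    have hdiff : f u (Function.update v j₀ (v j₀ + t)) - f u v =
        (k:ℝ) - cj - k * (Real.log k - Real.log cj) := by
      rw [hstep, hA, ht]
    have := hmin u (Function.update v j₀ (v j₀ + t))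
    have hkey : cj - k - k * (Real.log cj - Real.log k) ≤ η := by linarith
    -- ψ := cj / k
    have hψpos : 0 < cj / k := div_pos hcjpos hkR
    have hlogψ : Real.log (cj / k) = Real.log cj - Real.log k :=
      Real.log_div (ne_of_gt hcjpos) (ne_of_gt hkR)
    have hkey2 : cj / k - 1 - Real.log (cj / k) ≤ η / k := by
      rw [hlogψ, le_div_iff₀ hkR]
      have hd : cj / k * k = cj := div_mul_cancel₀ _ (ne_of_gt hkR)
      nlinarith [hkey, hd]
    have hlow := lower_bd hψpos (le_of_lt (div_pos hη hkR)) hkey2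
    have hsqrt : Real.sqrt (η * k) = k * Real.sqrt (η / k) := by
      rw [show η * k = (η / k) * k^2 by field_simp, Real.sqrt_mul (by positivity),
        Real.sqrt_sq hkR.le]
      ring
    rw [hsqrt]
    have hfin : (1 - 2 * Real.sqrt (η / k)) * k ≤ cj := (le_div_iff₀ hkR).mp hlow
    have heq : (k:ℝ) - 2 * (k * Real.sqrt (η / k)) = (1 - 2 * Real.sqrt (η / k)) * k := by
      ring
    rw [heq]
    exact hfin

lemma exists_matching {n k : ℕ} (hn : 0 < n) (hk : 0 < k) (B : Matrix (Fin (n * k)) (Fin n) ℂ)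
    (hS : PropertyS B) :
    ∃ fb : Fin (n * k) → Fin n × Fin k, Function.Bijective fb ∧ ∀ i, B i (fb i).1 ≠ 0 := by
  classical
  set t : Fin (n * k) → Finset (Fin n × Fin k) := fun i =>
    (Finset.univ.filter fun j => B i j ≠ 0) ×ˢ (Finset.univ : Finset (Fin k)) with ht
  have hhall : ∀ s : Finset (Fin (n * k)), s.card ≤ (s.biUnion t).card := by
    intro s
    set J' : Finset (Fin n) := s.biUnion (fun i => Finset.univ.filter fun j => B i j ≠ 0)
      with hJ'
    have hbu : s.biUnion t = J' ×ˢ (Finset.univ : Finset (Fin k)) := by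
      ext p
      simp only [hJ', ht, Finset.mem_biUnion, Finset.mem_product, Finset.mem_filter,
        Finset.mem_univ, true_and, and_true]
      try tauto
    rw [hbu, Finset.card_product, Finset.card_univ, Fintype.card_fin]
    set Jc : Finset (Fin n) := Finset.univ.filter (fun j => ∀ i ∈ s, B i j = 0) with hJc
    have hPS := hS s Jc (by
      intro i hi j hj
      rw [hJc, Finset.mem_filter] at hj
      exact hj.2 i hi)
    have hcompl : J' = Jcᶜ := by
      ext j
      simp only [hJ', hJc, Finset.mem_biUnion, Finset.mem_filter, Finset.mem_univ, true_and,
        Finset.mem_compl]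
      push_neg
      tauto
    have hcard : J'.card = n - Jc.card := by
      rw [hcompl, Finset.card_compl, Fintype.card_fin]
    have hle : Jc.card ≤ n := by
      calc Jc.card ≤ Fintype.card (Fin n) := Finset.card_le_univ Jc
        _ = n := Fintype.card_fin n
    -- real arithmetic
    have hnk : (0:ℝ) < (n * k : ℕ) := by positivity
    have hnR : (0:ℝ) < n := by exact_mod_cast hn
    have hkR : (0:ℝ) < k := by exact_mod_cast hk
    have hmain : (s.card : ℝ) ≤ (J'.card : ℝ) * k := by
      have hJR : (J'.card : ℝ) = (n : ℝ) - Jc.card := by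
        rw [hcard]
        push_cast [hle]
        ring
      rw [div_add_div _ _ (ne_of_gt hnk) (ne_of_gt hnR), div_le_one (by positivity)] at hPS
      have hnkR : ((n * k : ℕ) : ℝ) = (n : ℝ) * k := by push_cast; ring
      rw [hJR]
      nlinarith [hPS, hnkR]
    exact_mod_cast hmain
  obtain ⟨f, hinj, hmem⟩ := (Finset.all_card_le_biUnion_card_iff_exists_injective t).mp hhall
  refine ⟨f, ?_, ?_⟩
  · rw [Fintype.bijective_iff_injective_and_card]
    exact ⟨hinj, by simp⟩
  · intro i
    have := hmem i
    rw [ht, Finset.mem_product, Finset.mem_filter] at this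
    exact this.1.2

lemma abs_entry_sq (a b : ℝ) (z : ℂ) (ha : 0 ≤ a) (hb : 0 ≤ b) :
    ‖(a:ℂ) * (b:ℂ) * z‖ ^ 2 = a ^ 2 * b ^ 2 * ‖z‖ ^ 2 := by
  rw [norm_mul, norm_mul, Complex.norm_of_nonneg ha, Complex.norm_of_nonneg hb]
  ring

theorem cover_to_scaling {m n k c : ℕ} (A : Matrix (Fin m) (Fin n) ℂ)
    (B : Matrix (Fin (n * k)) (Fin n) ℂ) (r : Fin (n * k) → Fin m)
    (hB : ∀ i, B i = A (r i))
    (hcover : ∀ i' : Fin m, ({i : Fin (n * k) | r i = i'}).ncard ≤ c)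
    (hS : PropertyS B) (ε : ℝ) (hε : 0 < ε) :
    ∃ (ρ : Fin m → ℂ) (γ : Fin n → ℂ), (∀ i, ρ i ≠ 0) ∧ (∀ j, γ j ≠ 0) ∧
      (∀ i : Fin m,
        Real.sqrt (∑ j : Fin n, ‖ρ i * γ j * A i j‖ ^ 2) ≤
          Real.sqrt (1 + ε)) ∧
      (∀ j : Fin n,
        Real.sqrt (((k : ℝ) - ε) / (c : ℝ)) ≤
          Real.sqrt (∑ i : Fin m, ‖ρ i * γ j * A i j‖ ^ 2)) := by
  classical
  by_cases hmain : ε < (k : ℝ) ∧ 0 < n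
  · -- main case
    obtain ⟨hkε, hn⟩ := hmain
    have hk : 0 < k := by
      by_contra h
      push_neg at h
      interval_cases k
      simp at hkε
      linarith
    have hMpos : 0 < n * k := Nat.mul_pos hn hk
    have hcpos : 0 < c := by
      have i₀ : Fin (n * k) := ⟨0, hMpos⟩
      have hsub : ({i : Fin (n * k) | r i = r i₀}).Nonempty := ⟨i₀, rfl⟩
      have hfin : ({i : Fin (n * k) | r i = r i₀}).Finite := Set.toFinite _
      have := hcover (r i₀)
      have hpos : 0 < ({i : Fin (n * k) | r i = r i₀}).ncard :=
        (Set.ncard_pos hfin).mpr hsub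
      omega
    -- squared-abs matrices
    set N : Fin (n * k) → Fin n → ℝ := fun i j => ‖B i j‖ ^ 2 with hN
    set NA : Fin m → Fin n → ℝ := fun i' j => ‖A i' j‖ ^ 2 with hNA
    have hNnn : ∀ i j, 0 ≤ N i j := fun i j => by positivity
    have hNAnn : ∀ i' j, 0 ≤ NA i' j := fun i' j => by positivity
    have hNr : ∀ i j, N i j = NA (r i) j := by
      intro i j
      simp only [hN, hNA]
      rw [congrFun (hB i) j]
    obtain ⟨fb, hbij, hfb⟩ := exists_matching hn hk B hS
    have hw : ∀ i, 0 < N i (fb i).1 := by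
      intro i
      exact pow_pos (norm_pos_iff.mpr (hfb i)) 2
    -- parameters
    set τ : ℝ := min ε 1 with hτ
    have hτpos : 0 < τ := lt_min hε one_pos
    have hτ1 : τ ≤ 1 := min_le_right _ _
    have hτε : τ ≤ ε := min_le_left _ _
    have hkR : (0:ℝ) < k := by exact_mod_cast hk
    have hk1 : (1:ℝ) ≤ k := by exact_mod_cast hk
    set η : ℝ := τ ^ 2 / (9 * k) with hηdef
    have hη : 0 < η := by positivity
    obtain ⟨u, v, hrow, hcol⟩ := scaling_exists hk N hNnn fb hbij hw η hη
    -- bounds on the parameters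
    have hsqη : Real.sqrt η ≤ τ / 3 := by
      have h1 : η ≤ (τ / 3) ^ 2 := by
        rw [hηdef]
        rw [div_le_iff₀ (by positivity : (0:ℝ) < 9 * k)]
        nlinarith [sq_nonneg τ]
      calc Real.sqrt η ≤ Real.sqrt ((τ / 3) ^ 2) := Real.sqrt_le_sqrt h1
        _ = τ / 3 := Real.sqrt_sq (by positivity)
    have hrowbd : (1 + Real.sqrt η) ^ 2 ≤ 1 + ε := by
      nlinarith [Real.sqrt_nonneg η, hsqη, hτ1, hτε, hτpos]
    have hcolbd : (k : ℝ) - ε ≤ (k : ℝ) - 2 * Real.sqrt (η * k) := by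
      have h1 : η * k = (τ / 3) ^ 2 := by
        rw [hηdef]; field_simp; ring
      rw [h1, Real.sqrt_sq (by positivity)]
      linarith
    -- fibers
    set S : Fin m → Finset (Fin (n * k)) := fun i' => Finset.univ.filter (fun i => r i = i')
      with hSdef
    have hcardS : ∀ i', (S i').card ≤ c := by
      intro i'
      have hset : {i : Fin (n * k) | r i = i'} = ↑(S i') := by
        ext i
        simp [hSdef]
      have := hcover i'
      rw [hset, Set.ncard_coe_finset] at this
      exact this
    -- the A-row scalars
    set x : Fin m → ℝ := fun i' =>
      if h : (S i').Nonempty then ((S i').image fun i => Real.exp (u i)).max' (h.image _)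
      else (∑ j, NA i' j * Real.exp (v j) + 1)⁻¹ with hxdef
    have hRAnn : ∀ i', 0 ≤ ∑ j, NA i' j * Real.exp (v j) := by
      intro i'
      exact Finset.sum_nonneg fun j _ => mul_nonneg (hNAnn i' j) (Real.exp_pos _).le
    have hxpos : ∀ i', 0 < x i' := by
      intro i'
      simp only [hxdef]
      by_cases h : (S i').Nonempty
      · rw [dif_pos h]
        obtain ⟨i, _, hieq⟩ := Finset.mem_image.mp (Finset.max'_mem ((S i').image fun i => Real.exp (u i)) (h.image _))
        rw [← hieq]
        exact Real.exp_pos _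
      · rw [dif_neg h]
        have := hRAnn i'
        positivity
    have hxmax : ∀ i', ∀ i ∈ S i', Real.exp (u i) ≤ x i' := by
      intro i' i hi
      simp only [hxdef]
      rw [dif_pos ⟨i, hi⟩]
      exact Finset.le_max' ((S i').image fun i => Real.exp (u i)) (Real.exp (u i)) (Finset.mem_image_of_mem _ hi)
    -- row bound at A level
    have hArow : ∀ i', x i' * ∑ j, NA i' j * Real.exp (v j) ≤ 1 + ε := by
      intro i'
      by_cases h : (S i').Nonempty
      · have hx : x i' ∈ (S i').image fun i => Real.exp (u i) := by
          simp only [hxdef]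
          rw [dif_pos h]
          exact Finset.max'_mem ((S i').image fun i => Real.exp (u i)) (h.image _)
        obtain ⟨i, hiS, hieq⟩ := Finset.mem_image.mp hx
        have hri : r i = i' := (Finset.mem_filter.mp hiS).2
        have hsums : ∑ j, NA i' j * Real.exp (v j) = ∑ j, N i j * Real.exp (v j) := by
          apply Finset.sum_congr rfl
          intro j _
          rw [hNr i j, hri]
        rw [hsums, ← hieq]
        calc Real.exp (u i) * ∑ j, N i j * Real.exp (v j) ≤ (1 + Real.sqrt η) ^ 2 := hrow i
          _ ≤ 1 + ε := hrowbd
      · simp only [hxdef]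
        rw [dif_neg h]
        set RA := ∑ j, NA i' j * Real.exp (v j)
        have h1 : 0 ≤ RA := hRAnn i'
        have h2 : (RA + 1)⁻¹ * RA ≤ 1 := by
          rw [inv_mul_le_iff₀ (by positivity)]
          linarith
        linarith
    -- column bound at A level
    have hAcol : ∀ j, ((k : ℝ) - ε) / c ≤
        Real.exp (v j) * ∑ i', x i' * NA i' j := by
      intro j
      have hcR : (0:ℝ) < c := by exact_mod_cast hcpos
      have hfiber : ∑ i, N i j * Real.exp (u i) =
          ∑ i', ∑ i ∈ (S i'), N i j * Real.exp (u i) := by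
        exact (Finset.sum_fiberwise_of_maps_to (fun i _ => Finset.mem_univ (r i)) _).symm
      have hinner : ∀ i', ∑ i ∈ (S i'), N i j * Real.exp (u i) ≤ c * (x i' * NA i' j) := by
        intro i'
        have h1 : ∀ i ∈ S i', N i j * Real.exp (u i) ≤ NA i' j * x i' := by
          intro i hi
          have hri : r i = i' := (Finset.mem_filter.mp hi).2
          have := hxmax i' i hi
          rw [hNr i j, hri]
          exact mul_le_mul_of_nonneg_left this (hNAnn i' j)
        calc ∑ i ∈ (S i'), N i j * Real.exp (u i) ≤ ∑ _i ∈ (S i'), NA i' j * x i' :=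
              Finset.sum_le_sum h1
          _ = (S i').card * (NA i' j * x i') := by rw [Finset.sum_const, nsmul_eq_mul]
          _ ≤ c * (x i' * NA i' j) := by
              have hc' : ((S i').card : ℝ) ≤ c := by exact_mod_cast hcardS i'
              have hnn : 0 ≤ NA i' j * x i' := mul_nonneg (hNAnn i' j) (hxpos i').le
              nlinarith
      have hsum : ∑ i, N i j * Real.exp (u i) ≤ c * ∑ i', x i' * NA i' j := by
        rw [hfiber, Finset.mul_sum]
        exact Finset.sum_le_sum fun i' _ => hinner i'
      have hB1 : (k : ℝ) - ε ≤ Real.exp (v j) * ∑ i, N i j * Real.exp (u i) :=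
        le_trans hcolbd (hcol j)
      rw [div_le_iff₀ hcR]
      calc (k:ℝ) - ε ≤ Real.exp (v j) * ∑ i, N i j * Real.exp (u i) := hB1
        _ ≤ Real.exp (v j) * (c * ∑ i', x i' * NA i' j) := by
            exact mul_le_mul_of_nonneg_left hsum (Real.exp_pos _).le
        _ = (Real.exp (v j) * ∑ i', x i' * NA i' j) * c := by ring
    -- assemble
    refine ⟨fun i' => ((Real.sqrt (x i') : ℝ) : ℂ), fun j => ((Real.exp (v j / 2) : ℝ) : ℂ),
      ?_, ?_, ?_, ?_⟩
    · intro i'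
      exact Complex.ofReal_ne_zero.mpr (ne_of_gt (Real.sqrt_pos.mpr (hxpos i')))
    · intro j
      exact Complex.ofReal_ne_zero.mpr (ne_of_gt (Real.exp_pos _))
    · intro i'
      apply Real.sqrt_le_sqrt
      have hterm : ∀ j, ‖((Real.sqrt (x i') : ℝ) : ℂ) *
          ((Real.exp (v j / 2) : ℝ) : ℂ) * A i' j‖ ^ 2 = x i' * (NA i' j * Real.exp (v j)) := by
        intro j
        rw [abs_entry_sq _ _ _ (Real.sqrt_nonneg _) (Real.exp_pos _).le]
        rw [Real.sq_sqrt (hxpos i').le]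
        have : Real.exp (v j / 2) ^ 2 = Real.exp (v j) := by
          rw [sq, ← Real.exp_add]
          ring_nf
        rw [this, hNA]
        ring
      calc ∑ j, ‖((Real.sqrt (x i') : ℝ) : ℂ) *
          ((Real.exp (v j / 2) : ℝ) : ℂ) * A i' j‖ ^ 2
          = ∑ j, x i' * (NA i' j * Real.exp (v j)) := Finset.sum_congr rfl fun j _ => hterm j
        _ = x i' * ∑ j, NA i' j * Real.exp (v j) := by rw [Finset.mul_sum]
        _ ≤ 1 + ε := hArow i'
    · intro j
      apply Real.sqrt_le_sqrt
      have hterm : ∀ i', ‖((Real.sqrt (x i') : ℝ) : ℂ) *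
          ((Real.exp (v j / 2) : ℝ) : ℂ) * A i' j‖ ^ 2 =
          Real.exp (v j) * (x i' * NA i' j) := by
        intro i'
        rw [abs_entry_sq _ _ _ (Real.sqrt_nonneg _) (Real.exp_pos _).le]
        rw [Real.sq_sqrt (hxpos i').le]
        have : Real.exp (v j / 2) ^ 2 = Real.exp (v j) := by
          rw [sq, ← Real.exp_add]
          ring_nf
        rw [this, hNA]
        ring
      calc ((k : ℝ) - ε) / c ≤ Real.exp (v j) * ∑ i', x i' * NA i' j := hAcol j
        _ = ∑ i', Real.exp (v j) * (x i' * NA i' j) := by rw [Finset.mul_sum]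
        _ = ∑ i', ‖((Real.sqrt (x i') : ℝ) : ℂ) *
            ((Real.exp (v j / 2) : ℝ) : ℂ) * A i' j‖ ^ 2 :=
            (Finset.sum_congr rfl fun i' _ => (hterm i').symm)
  · -- fallback case
    push_neg at hmain
    set RA : Fin m → ℝ := fun i' => ∑ j, ‖A i' j‖ ^ 2 with hRA
    have hRAnn : ∀ i', 0 ≤ RA i' := fun i' =>
      Finset.sum_nonneg fun j _ => by positivity
    refine ⟨fun i' => ((Real.sqrt ((RA i' + 1)⁻¹) : ℝ) : ℂ), fun _ => 1, ?_, ?_, ?_, ?_⟩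
    · intro i'
      refine Complex.ofReal_ne_zero.mpr (ne_of_gt (Real.sqrt_pos.mpr ?_))
      have := hRAnn i'
      positivity
    · intro j
      exact one_ne_zero
    · intro i'
      apply Real.sqrt_le_sqrt
      have hterm : ∀ j, ‖((Real.sqrt ((RA i' + 1)⁻¹) : ℝ) : ℂ) * 1 * A i' j‖ ^ 2
          = (RA i' + 1)⁻¹ * ‖A i' j‖ ^ 2 := by
        intro j
        rw [mul_one, norm_mul, Complex.norm_of_nonneg (Real.sqrt_nonneg _),
          mul_pow, Real.sq_sqrt (by positivity : (0:ℝ) ≤ (RA i' + 1)⁻¹)]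
      have h1 : 0 ≤ RA i' := hRAnn i'
      calc ∑ j, ‖((Real.sqrt ((RA i' + 1)⁻¹) : ℝ) : ℂ) * 1 * A i' j‖ ^ 2
          = (RA i' + 1)⁻¹ * RA i' := by
            rw [Finset.mul_sum]
            exact Finset.sum_congr rfl fun j _ => hterm j
        _ ≤ 1 := by
            rw [inv_mul_le_iff₀ (by positivity)]
            linarith
        _ ≤ 1 + ε := by linarith
    · intro j
      have hn : 0 < n := j.pos
      have hkε : (k : ℝ) ≤ ε := by
        by_contra h
        push_neg at h
        have := hmain h
        omega
      have hle : ((k : ℝ) - ε) / c ≤ 0 :=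
        div_nonpos_of_nonpos_of_nonneg (by linarith) (by positivity)
      rw [Real.sqrt_eq_zero_of_nonpos hle]
      exact Real.sqrt_nonneg _
end

section
/- Let A be an m × n matrix over ℂ. Suppose every row of A has ℓ₂ norm less than α, and the supports of any two distinct columns of A intersect in at most t coordinates. Let M = A*A (conjugate transpose of A times A). Then Σ_{i≠j} |M_{ij}|² ≤ t·m·α⁴. Moreover, if in addition every row of A has support of size at most q, then Σ_{i≠j} |M_{ij}|² ≤ (1 − 1/q)·t·m·α⁴. -/
/-!
Entry `(j, k)` of `Aᴴ * A` is a sum over the at most `t` rows in which columns `j` and `k` are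
both nonzero, so Cauchy–Schwarz gives `‖M j k‖² ≤ t ∑ᵢ ‖A i j‖² ‖A i k‖²`. Summing over `j ≠ k`
bounds the left side by `t ∑ᵢ (rᵢ⁴ - ∑ⱼ ‖A i j‖⁴)`, where `rᵢ < α` is the norm of row `i`.
If row `i` has at most `q` nonzero entries, Cauchy–Schwarz once more gives
`∑ⱼ ‖A i j‖⁴ ≥ rᵢ⁴ / q`.
-/

open Matrix Finset

section SumSquares

variable {ι : Type*} [Fintype ι]

theorem sq_sum_le_card_support_mul_sum_sq {α : Type*} [Semiring α] [LinearOrder α]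
    [IsStrictOrderedRing α] [ExistsAddOfLE α] (f : ι → α) :
    (∑ i, f i) ^ 2 ≤ #{i | f i ≠ 0} * ∑ i, f i ^ 2 := by
  calc (∑ i, f i) ^ 2 = (∑ i with f i ≠ 0, f i) ^ 2 := by rw [sum_filter_ne_zero]
    _ ≤ #{i | f i ≠ 0} * ∑ i with f i ≠ 0, f i ^ 2 := sq_sum_le_card_mul_sum_sq
    _ ≤ #{i | f i ≠ 0} * ∑ i, f i ^ 2 := by
      gcongr
      · exact fun i _ _ => sq_nonneg (f i)
      · exact subset_univ _

theorem sq_sum_sub_sum_sq_le {α : Type*} [Field α] [LinearOrder α] [IsStrictOrderedRing α]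
    (f : ι → α) {q : ℕ} (hq : #{i | f i ≠ 0} ≤ q) :
    (∑ i, f i) ^ 2 - ∑ i, f i ^ 2 ≤ (1 - 1 / q) * (∑ i, f i) ^ 2 := by
  have hsq : 0 ≤ ∑ i, f i ^ 2 := sum_nonneg fun i _ => sq_nonneg (f i)
  rcases Nat.eq_zero_or_pos q with rfl | hq_pos
  · simpa using hsq
  have hcs : (∑ i, f i) ^ 2 ≤ q * ∑ i, f i ^ 2 :=
    (sq_sum_le_card_support_mul_sum_sq f).trans (by gcongr)
  have hdiv : (∑ i, f i) ^ 2 / q ≤ ∑ i, f i ^ 2 := by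
    rw [div_le_iff₀ (by exact_mod_cast hq_pos)]; linarith
  linarith [show (1 - 1 / (q : α)) * (∑ i, f i) ^ 2 = (∑ i, f i) ^ 2 - (∑ i, f i) ^ 2 / q by ring]

theorem sum_offDiag_mul_eq_sq_sum_sub_sum_sq {R : Type*} [CommRing R] [DecidableEq ι]
    (f : ι → R) :
    ∑ p ∈ univ.filter (fun p : ι × ι => p.1 ≠ p.2), f p.1 * f p.2
      = (∑ i, f i) ^ 2 - ∑ i, f i ^ 2 := by
  rw [eq_sub_iff_add_eq, sq, sum_mul_sum, ← Fintype.sum_prod_type',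
    ← sum_filter_add_sum_filter_not univ (fun p : ι × ι => p.1 ≠ p.2)]
  congr 1
  simp only [sq, ne_eq, Decidable.not_not, sum_filter, Fintype.sum_prod_type, sum_ite_eq,
    mem_univ, ↓reduceIte]

end SumSquares

section GramMatrix

variable {m n 𝕜 : Type*} [Fintype m] [RCLike 𝕜]

theorem norm_conjTranspose_mul_self_apply_sq_le (A : Matrix m n 𝕜) (j k : n) :
    ‖(Aᴴ * A) j k‖ ^ 2 ≤ #{i | A i j ≠ 0 ∧ A i k ≠ 0} * ∑ i, ‖A i j‖ ^ 2 * ‖A i k‖ ^ 2 := by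
  have hsupp : #{i | ‖A i j‖ * ‖A i k‖ ≠ 0} = #{i | A i j ≠ 0 ∧ A i k ≠ 0} := by
    simp only [ne_eq, mul_eq_zero, norm_eq_zero, not_or]
  calc ‖(Aᴴ * A) j k‖ ^ 2 ≤ (∑ i, ‖A i j‖ * ‖A i k‖) ^ 2 := by
        gcongr
        rw [mul_apply]
        refine (norm_sum_le _ _).trans_eq ?_
        simp only [conjTranspose_apply, norm_mul, norm_star]
    _ ≤ #{i | A i j ≠ 0 ∧ A i k ≠ 0} * ∑ i, (‖A i j‖ * ‖A i k‖) ^ 2 :=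
        hsupp ▸ sq_sum_le_card_support_mul_sum_sq _
    _ = #{i | A i j ≠ 0 ∧ A i k ≠ 0} * ∑ i, ‖A i j‖ ^ 2 * ‖A i k‖ ^ 2 := by
        simp only [mul_pow]

theorem sum_offDiag_norm_conjTranspose_mul_self_sq_le [Fintype n] [DecidableEq n]
    (A : Matrix m n 𝕜) (t : ℕ) (hA : ∀ j k, j ≠ k → #{i | A i j ≠ 0 ∧ A i k ≠ 0} ≤ t) :
    ∑ p ∈ univ.filter (fun p : n × n => p.1 ≠ p.2), ‖(Aᴴ * A) p.1 p.2‖ ^ 2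
      ≤ t * ∑ i, ((∑ j, ‖A i j‖ ^ 2) ^ 2 - ∑ j, (‖A i j‖ ^ 2) ^ 2) := by
  calc ∑ p ∈ univ.filter (fun p : n × n => p.1 ≠ p.2), ‖(Aᴴ * A) p.1 p.2‖ ^ 2
      ≤ ∑ p ∈ univ.filter (fun p : n × n => p.1 ≠ p.2),
          t * ∑ i, ‖A i p.1‖ ^ 2 * ‖A i p.2‖ ^ 2 := by
        refine sum_le_sum fun p hp => (norm_conjTranspose_mul_self_apply_sq_le A _ _).trans ?_
        gcongr
        exact hA _ _ (mem_filter.1 hp).2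
    _ = t * ∑ i, ∑ p ∈ univ.filter (fun p : n × n => p.1 ≠ p.2),
          ‖A i p.1‖ ^ 2 * ‖A i p.2‖ ^ 2 := by
        rw [← mul_sum, sum_comm]
    _ = t * ∑ i, ((∑ j, ‖A i j‖ ^ 2) ^ 2 - ∑ j, (‖A i j‖ ^ 2) ^ 2) := by
        congr 1
        exact sum_congr rfl fun i _ => sum_offDiag_mul_eq_sq_sum_sub_sum_sq (‖A i ·‖ ^ 2)

end GramMatrix

theorem sum_of_squares_off_diagonal {m n : ℕ} (A : Matrix (Fin m) (Fin n) ℂ)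
    (α : ℝ) (t q : ℕ)
    (hrow : ∀ i : Fin m, Real.sqrt (∑ j : Fin n, ‖A i j‖ ^ 2) < α)
    (hcol : ∀ j₁ j₂ : Fin n, j₁ ≠ j₂ →
      ({i : Fin m | A i j₁ ≠ 0} ∩ {i : Fin m | A i j₂ ≠ 0}).ncard ≤ t) :
    (∑ p ∈ Finset.univ.filter (fun p : Fin n × Fin n => p.1 ≠ p.2),
        ‖(Aᴴ * A) p.1 p.2‖ ^ 2) ≤ (t : ℝ) * (m : ℝ) * α ^ 4 ∧
    ((∀ i : Fin m, ({j : Fin n | A i j ≠ 0}).ncard ≤ q) →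
      (∑ p ∈ Finset.univ.filter (fun p : Fin n × Fin n => p.1 ≠ p.2),
          ‖(Aᴴ * A) p.1 p.2‖ ^ 2) ≤
        (1 - 1 / (q : ℝ)) * (t : ℝ) * (m : ℝ) * α ^ 4) := by
  have hsum := sum_offDiag_norm_conjTranspose_mul_self_sq_le A t fun j k hjk => by
    simpa [Set.ncard_eq_toFinset_card', filter_and] using hcol j k hjk
  have hrow_sq : ∀ i, (∑ j, ‖A i j‖ ^ 2) ^ 2 ≤ α ^ 4 := fun i => by
    rw [← Real.sq_sqrt (sum_nonneg fun j _ => sq_nonneg ‖A i j‖), ← pow_mul]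
    exact pow_le_pow_left₀ (Real.sqrt_nonneg _) (hrow i).le 4
  refine ⟨hsum.trans ?_, fun hq => hsum.trans ?_⟩
  · calc (t : ℝ) * ∑ i, ((∑ j, ‖A i j‖ ^ 2) ^ 2 - ∑ j, (‖A i j‖ ^ 2) ^ 2)
        ≤ t * ∑ _i : Fin m, α ^ 4 := by
          gcongr with i
          linarith [hrow_sq i, sum_nonneg fun j (_ : j ∈ univ) => sq_nonneg (‖A i j‖ ^ 2)]
      _ = t * m * α ^ 4 := by simp only [sum_const, card_univ, Fintype.card_fin, nsmul_eq_mul]; ring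
  · have hq_sq : ∀ i, #{j | ‖A i j‖ ^ 2 ≠ 0} ≤ q := fun i => by
      simpa [Set.ncard_eq_toFinset_card'] using hq i
    calc (t : ℝ) * ∑ i, ((∑ j, ‖A i j‖ ^ 2) ^ 2 - ∑ j, (‖A i j‖ ^ 2) ^ 2)
        ≤ t * ∑ _i : Fin m, (1 - 1 / (q : ℝ)) * α ^ 4 := by
          have hfactor : 0 ≤ 1 - 1 / (q : ℝ) := by
            simpa using Nat.cast_inv_le_one q
          gcongr with i
          exact (sq_sum_sub_sum_sq_le _ (hq_sq i)).trans (by gcongr; exact hrow_sq i)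
      _ = (1 - 1 / (q : ℝ)) * t * m * α ^ 4 := by
          simp only [sum_const, card_univ, Fintype.card_fin, nsmul_eq_mul]; ring
end

section
/- Let v₁,…,vₙ ∈ ℂ^d be a δ-SG configuration, and let V be the n × d matrix whose i-th row is vᵢ. Then there exists an m × n complex matrix A such that A is a (3, 3k, 6)-design matrix with k = ⌈δ(n−1)⌉, every row of A has support of size exactly 3, and A·V = 0. -/
/-- `v j` lies on a special line through `v i`: the line through the two (distinct)
points contains a third point of the configuration. -/
def OnSpecialLine {n d : ℕ} (v : Fin n → (Fin d → ℂ)) (i j : Fin n) : Prop :=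
  j ≠ i ∧ ∃ l : Fin n, l ≠ i ∧ l ≠ j ∧ Collinear ℂ ({v i, v j, v l} : Set (Fin d → ℂ))

/-- A set of `n` distinct points is a `δ`-SG configuration if for every point `v i`, at
least `δ(n-1)` of the remaining points lie on special lines through `v i`. -/
def IsSGConfig {n d : ℕ} (v : Fin n → (Fin d → ℂ)) (δ : ℝ) : Prop :=
  Function.Injective v ∧
  ∀ i : Fin n, δ * ((n : ℝ) - 1) ≤ (({j : Fin n | OnSpecialLine v i j}).ncard : ℝ)

/-!
On every line carrying `r ≥ 3` points of the configuration fix an idempotent Latin square `∘`;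
one exists for every order `r ≠ 2` (`(a + b) / 2` in `ZMod r` for odd `r`, and its prolongation
by one point for even `r`). Every ordered pair `(a, b)` of distinct points on such a
line gives the collinear triple `a, b, a ∘ b`, hence a linear relation supported on exactly these
three points: these relations are the rows of `A`. A special neighbour `j` of `p` puts `p` into
the three rows `(p, j)`, `(j, p)` and `(g, j)` with `g ∘ j = p`, so column `p` has at least
`3 ⌈δ (n - 1)⌉` nonzero entries. Two points `p ≠ q` share only rows on their common line, and
such a row is determined by the positions of `p` and `q` in its triple, because any two entries
of a triple `(a, b, a ∘ b)` of a Latin square determine the third; this leaves at most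
`3 * 2 = 6` rows.
-/

open Function Set

section LatinSquare

variable {α β : Type*}

structure IsIdempotentLatinSquare (f : α → α → α) : Prop where
  bijective_left : ∀ a, Bijective (f a)
  bijective_right : ∀ b, Bijective (f · b)
  idem : ∀ a, f a a = a

theorem IsIdempotentLatinSquare.conj {f : β → β → β} (hf : IsIdempotentLatinSquare f)
    (e : α ≃ β) : IsIdempotentLatinSquare fun a b => e.symm (f (e a) (e b)) where
  bijective_left a := e.symm.bijective.comp ((hf.bijective_left (e a)).comp e.bijective)
  bijective_right b := e.symm.bijective.comp ((hf.bijective_right (e b)).comp e.bijective)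
  idem a := by simp [hf.idem]

theorem isIdempotentLatinSquare_of_subsingleton [Subsingleton α] :
    IsIdempotentLatinSquare fun a (_ : α) => a where
  bijective_left a := ⟨fun _ _ _ => Subsingleton.elim _ _, fun _ => ⟨a, Subsingleton.elim _ _⟩⟩
  bijective_right _ := bijective_id
  idem _ := rfl

namespace ZMod

variable {q : ℕ} (hq : Odd q)

def halve : ZMod q ≃ ZMod q :=
  Units.mulLeft (unitOfCoprime 2 (Nat.coprime_two_left.2 hq))⁻¹

theorem halve_add_self (a : ZMod q) : halve hq (a + a) = a := by
  have h2 : (unitOfCoprime 2 (Nat.coprime_two_left.2 hq) : ZMod q) = 2 := by simp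
  change _ * (a + a) = a
  rw [← two_mul, ← mul_assoc, ← h2, Units.inv_mul, one_mul]

theorem halve_add (a b : ZMod q) : halve hq (a + b) = halve hq a + halve hq b :=
  mul_add _ _ _

theorem halve_sub (a b : ZMod q) : halve hq (a - b) = halve hq a - halve hq b :=
  mul_sub _ _ _

theorem isIdempotentLatinSquare_halve_add :
    IsIdempotentLatinSquare fun a b : ZMod q => halve hq (a + b) where
  bijective_left a := (halve hq).bijective.comp (Equiv.addLeft a).bijective
  bijective_right b := (halve hq).bijective.comp (Equiv.addRight b).bijective
  idem := halve_add_self hq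

/-- The prolongation of `halve (a + b)` by a new point `none`, which takes over the
transversal `(i, i + 1)`; the displaced entries `i + 1/2` fill the new row and column. -/
def prolongation : Option (ZMod q) → Option (ZMod q) → Option (ZMod q)
  | some i =>
    Equiv.swap none (some (i + halve hq 1)) ∘ Equiv.optionCongr ((Equiv.addLeft i).trans (halve hq))
  | none => Equiv.optionCongr (Equiv.subRight (halve hq 1))

theorem isIdempotentLatinSquare_prolongation (hq1 : q ≠ 1) :
    IsIdempotentLatinSquare (prolongation hq) where
  bijective_left
    | some i => (Equiv.swap _ _).bijective.comp (Equiv.optionCongr _).bijective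
    | none => (Equiv.optionCongr _).bijective
  bijective_right
    | some j => by
      convert ((Equiv.swap none (some (j - halve hq 1))).bijective.comp
        (Equiv.optionCongr ((Equiv.addRight j).trans (halve hq))).bijective) with x
      cases x with
      | none => simp [prolongation]
      | some i =>
        have e₁ : i + halve hq 1 = halve hq (i + i + 1) := by rw [halve_add, halve_add_self]
        have e₂ : j - halve hq 1 = halve hq (j + j - 1) := by rw [halve_sub, halve_add_self]
        have e₃ : i + j = i + i + 1 ↔ i + j = j + j - 1 :=
          ⟨fun h => by linear_combination -h, fun h => by linear_combination -h⟩
        simp [prolongation, Equiv.swap_apply_def, e₁, e₂, e₃]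
    | none => by
      convert (Equiv.optionCongr (Equiv.addRight (halve hq 1))).bijective with x
      cases x <;> simp [prolongation]
  idem
    | some i => by
      have : halve hq 1 ≠ 0 := by
        rw [← show halve hq 0 = 0 from mul_zero _, Ne, (halve hq).apply_eq_iff_eq,
          ZMod.one_eq_zero_iff]
        exact hq1
      simp [prolongation, halve_add_self, Equiv.swap_apply_of_ne_of_ne, this]
    | none => rfl

end ZMod

theorem exists_isIdempotentLatinSquare [Finite α] (h : Nat.card α ≠ 2) :
    ∃ f : α → α → α, IsIdempotentLatinSquare f := by
  obtain hα | hα := le_or_gt (Nat.card α) 1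
  · have := Finite.card_le_one_iff_subsingleton.1 hα
    exact ⟨_, isIdempotentLatinSquare_of_subsingleton⟩
  obtain hev | hodd := Nat.even_or_odd (Nat.card α)
  · have hodd : Odd (Nat.card α - 1) := Nat.Even.sub_odd (by omega) hev odd_one
    have : NeZero (Nat.card α - 1) := ⟨by omega⟩
    have hcard : Nat.card α = Nat.card (Option (ZMod (Nat.card α - 1))) := by
      rw [Finite.card_option, Nat.card_zmod]; omega
    obtain ⟨e⟩ := Finite.card_eq.1 hcard
    exact ⟨_, (ZMod.isIdempotentLatinSquare_prolongation hodd (by omega)).conj e⟩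
  · have : NeZero (Nat.card α) := ⟨by omega⟩
    obtain ⟨e⟩ := Finite.card_eq.1 (Nat.card_zmod (Nat.card α)).symm
    exact ⟨_, (ZMod.isIdempotentLatinSquare_halve_add hodd).conj e⟩

structure IsIdempotentLatinSquareOn (f : α → α → α) (s : Set α) : Prop where
  bijOn_left : ∀ a ∈ s, BijOn (f a) s s
  bijOn_right : ∀ b ∈ s, BijOn (f · b) s s
  idem : ∀ a ∈ s, f a a = a

theorem Function.Bijective.bijOn_of_val_eq {s : Set α} {g : s → s} (hg : Bijective g)
    {f : α → α} (hf : ∀ x : s, f x = g x) : BijOn f s s := by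
  have hmaps : MapsTo f s s := fun x hx => hf ⟨x, hx⟩ ▸ (g ⟨x, hx⟩).2
  have hres : hmaps.restrict f s s = g := funext fun x => Subtype.ext (hf x)
  exact ⟨hmaps, hmaps.restrict_inj.1 (hres ▸ hg.1), hmaps.restrict_surjective_iff.1 (hres ▸ hg.2)⟩

theorem IsIdempotentLatinSquare.isIdempotentLatinSquareOn_extend {s : Set α} {g : s → s → s}
    (hg : IsIdempotentLatinSquare g) [DecidablePred (· ∈ s)] :
    IsIdempotentLatinSquareOn
      (fun a b => if h : a ∈ s ∧ b ∈ s then (g ⟨a, h.1⟩ ⟨b, h.2⟩ : α) else a) s where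
  bijOn_left a ha := (hg.bijective_left ⟨a, ha⟩).bijOn_of_val_eq fun b => by simp [ha]
  bijOn_right b hb := (hg.bijective_right ⟨b, hb⟩).bijOn_of_val_eq fun a => by simp [hb]
  idem a ha := by simp [ha, hg.idem]

theorem exists_isIdempotentLatinSquareOn {s : Set α} (hs : s.Finite) (h : s.ncard ≠ 2) :
    ∃ f : α → α → α, IsIdempotentLatinSquareOn f s := by
  classical
  have := hs.to_subtype
  obtain ⟨g, hg⟩ := exists_isIdempotentLatinSquare (α := s) h
  exact ⟨_, hg.isIdempotentLatinSquareOn_extend⟩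

open Classical in
/-- An idempotent Latin square on `s`, chosen once and for all; junk if `s` carries none. -/
noncomputable def latinSquareOn (s : Set α) : α → α → α :=
  if h : ∃ f, IsIdempotentLatinSquareOn f s then h.choose else fun a _ => a

theorem isIdempotentLatinSquareOn_latinSquareOn {s : Set α} (hs : s.Finite) (h : s.ncard ≠ 2) :
    IsIdempotentLatinSquareOn (latinSquareOn s) s := by
  have h' := exists_isIdempotentLatinSquareOn hs h
  rw [latinSquareOn, dif_pos h']
  exact h'.choose_spec

def triple (f : α → α → α) (r : α × α) : Fin 3 → α := ![r.1, r.2, f r.1 r.2]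

def posIn [DecidableEq α] (x : α) (r : α × α) : Fin 3 :=
  if x = r.1 then 0 else if x = r.2 then 1 else 2

theorem triple_posIn [DecidableEq α] {f : α → α → α} {x : α} {r : α × α}
    (hx : x ∈ ({r.1, r.2, f r.1 r.2} : Set α)) : triple f r (posIn x r) = x := by
  unfold posIn
  split_ifs with h₁ h₂ <;> simp_all [triple]

namespace IsIdempotentLatinSquareOn

variable {f : α → α → α} {s : Set α} (hf : IsIdempotentLatinSquareOn f s) {a b : α}
include hf

theorem apply_mem (ha : a ∈ s) (hb : b ∈ s) : f a b ∈ s :=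
  (hf.bijOn_left a ha).mapsTo hb

theorem apply_ne_left (ha : a ∈ s) (hb : b ∈ s) (hab : a ≠ b) : f a b ≠ a := fun h =>
  hab ((hf.bijOn_left a ha).injOn hb ha (by rw [h, hf.idem a ha])).symm

theorem apply_ne_right (ha : a ∈ s) (hb : b ∈ s) (hab : a ≠ b) : f a b ≠ b := fun h =>
  hab ((hf.bijOn_right b hb).injOn ha hb (by simp only [h, hf.idem b hb]))

theorem eq_of_triple_eq {r r' : α × α} (hr : r.1 ∈ s ∧ r.2 ∈ s) (hr' : r'.1 ∈ s ∧ r'.2 ∈ s)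
    {x y : Fin 3} (hxy : x ≠ y) (hx : triple f r x = triple f r' x)
    (hy : triple f r y = triple f r' y) : r = r' := by
  obtain ⟨a, b⟩ := r
  obtain ⟨a', b'⟩ := r'
  have hrow : a = a' → f a b = f a' b' → b = b' := by
    rintro rfl h; exact (hf.bijOn_left a hr.1).injOn hr.2 hr'.2 h
  have hcol : b = b' → f a b = f a' b' → a = a' := by
    rintro rfl h; exact (hf.bijOn_right b hr.2).injOn hr.1 hr'.1 h
  fin_cases x <;> fin_cases y <;> simp [triple] at hxy hx hy ⊢ <;> tauto

end IsIdempotentLatinSquareOn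

end LatinSquare

section Relations

variable {k E ι : Type*} [Field k] [AddCommGroup E] [Module k E] [Fintype ι]

theorem exists_relation_of_mem_line {v : ι → E} {a b c : ι} (hca : v c ≠ v a)
    (hcb : v c ≠ v b) (hc : v c ∈ line[k, v a, v b]) :
    ∃ w : ι → k, {i | w i ≠ 0} = {a, b, c} ∧ ∑ i, w i • v i = 0 := by
  classical
  obtain ⟨t, ht⟩ := mem_affineSpan_pair_iff_exists_lineMap_eq.1 hc
  have ht₀ : t ≠ 0 := by rintro rfl; exact hca (by rw [← ht, AffineMap.lineMap_apply_zero])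
  have ht₁ : t ≠ 1 := by rintro rfl; exact hcb (by rw [← ht, AffineMap.lineMap_apply_one])
  have hac : a ≠ c := by rintro rfl; exact hca rfl
  have hbc : b ≠ c := by rintro rfl; exact hcb rfl
  refine ⟨Pi.single a (1 - t) + Pi.single b t - Pi.single c 1, ?_, ?_⟩
  · have h1t : 1 - t ≠ 0 := sub_ne_zero.2 ht₁.symm
    ext i
    by_cases hia : i = a <;> by_cases hib : i = b <;> by_cases hic : i = c <;>
      simp_all [Pi.single_apply]
  · rw [AffineMap.lineMap_apply_module] at ht
    simp only [Pi.add_apply, Pi.sub_apply, add_smul, sub_smul, Finset.sum_add_distrib,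
      Finset.sum_sub_distrib, Pi.single_apply, ite_smul, zero_smul, Finset.sum_ite_eq',
      Finset.mem_univ, if_true, one_smul, ← ht]
    abel

variable {F κ δ : Type*} [Semiring F]

theorem exists_matrix_of_relations {R : Set κ} [Finite R] {v : ι → δ → F} {S : κ → Set ι}
    (h : ∀ r ∈ R, ∃ w : ι → F, {i | w i ≠ 0} = S r ∧ ∑ i, w i • v i = 0) :
    ∃ (m : ℕ) (A : Matrix (Fin m) ι F), (∀ i, ∃ r ∈ R, {j | A i j ≠ 0} = S r) ∧
      (∀ P : Set ι → Prop, {i | P {j | A i j ≠ 0}}.ncard = {r | r ∈ R ∧ P (S r)}.ncard) ∧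
      A * Matrix.of v = 0 := by
  choose w hw using h
  obtain ⟨m, ⟨e⟩⟩ : ∃ m, Nonempty (Fin m ≃ R) := ⟨_, ⟨(Finite.equivFin R).symm⟩⟩
  have hsupp (i) : {j | w (e i) (e i).2 j ≠ 0} = S (e i) := (hw _ (e i).2).1
  refine ⟨m, Matrix.of fun i => w (e i) (e i).2, fun i => ⟨e i, (e i).2, hsupp i⟩,
    fun P => ?_, ?_⟩
  · simp only [Matrix.of_apply, hsupp]
    refine Set.ncard_congr (fun i _ => (e i : κ)) (fun i hi => ⟨(e i).2, hi⟩)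
      (fun i j _ _ h => e.injective (Subtype.ext h)) ?_
    rintro r ⟨hr, hP⟩
    exact ⟨e.symm ⟨r, hr⟩, by simpa using hP, by simp⟩
  · ext i j
    simpa [Matrix.mul_apply, Finset.sum_apply] using congrFun (hw _ (e i).2).2 j

end Relations

section Configuration

variable (k : Type*) {E ι : Type*} [Field k] [AddCommGroup E] [Module k E] (v : ι → E)

def lineIndices (a b : ι) : Set ι := {i | v i ∈ line[k, v a, v b]}

noncomputable def thirdPoint (a b : ι) : ι := latinSquareOn (lineIndices k v a b) a b

def specialPairs : Set (ι × ι) := {r | r.1 ≠ r.2 ∧ 3 ≤ (lineIndices k v r.1 r.2).ncard}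

def rowSupport (r : ι × ι) : Set ι := {r.1, r.2, thirdPoint k v r.1 r.2}

variable {k v}

theorem left_mem_lineIndices (a b : ι) : a ∈ lineIndices k v a b :=
  left_mem_affineSpan_pair k _ _

theorem right_mem_lineIndices (a b : ι) : b ∈ lineIndices k v a b :=
  right_mem_affineSpan_pair k _ _

theorem lineIndices_comm (a b : ι) : lineIndices k v a b = lineIndices k v b a := by
  simp only [lineIndices, Set.pair_comm]

theorem lineIndices_eq_of_mem {a b x y : ι} (hx : x ∈ lineIndices k v a b)
    (hy : y ∈ lineIndices k v a b) (hxy : v x ≠ v y) :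
    lineIndices k v x y = lineIndices k v a b := by
  simp only [lineIndices, affineSpan_pair_eq_of_mem_of_mem_of_ne hx hy hxy]

theorem thirdPoint_eq_of_mem {a b x y : ι} (hx : x ∈ lineIndices k v a b)
    (hy : y ∈ lineIndices k v a b) (hxy : v x ≠ v y) :
    thirdPoint k v x y = latinSquareOn (lineIndices k v a b) x y := by
  rw [thirdPoint, lineIndices_eq_of_mem hx hy hxy]

theorem isIdempotentLatinSquareOn_lineIndices {a b : ι} (h : 3 ≤ (lineIndices k v a b).ncard) :
    IsIdempotentLatinSquareOn (latinSquareOn (lineIndices k v a b)) (lineIndices k v a b) :=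
  isIdempotentLatinSquareOn_latinSquareOn (Set.finite_of_ncard_ne_zero (by omega)) (by omega)

variable {r : ι × ι} (hr : r ∈ specialPairs k v)
include hr

theorem thirdPoint_mem_lineIndices : thirdPoint k v r.1 r.2 ∈ lineIndices k v r.1 r.2 :=
  (isIdempotentLatinSquareOn_lineIndices hr.2).apply_mem (left_mem_lineIndices _ _)
    (right_mem_lineIndices _ _)

theorem thirdPoint_ne_left : thirdPoint k v r.1 r.2 ≠ r.1 :=
  (isIdempotentLatinSquareOn_lineIndices hr.2).apply_ne_left (left_mem_lineIndices _ _)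
    (right_mem_lineIndices _ _) hr.1

theorem thirdPoint_ne_right : thirdPoint k v r.1 r.2 ≠ r.2 :=
  (isIdempotentLatinSquareOn_lineIndices hr.2).apply_ne_right (left_mem_lineIndices _ _)
    (right_mem_lineIndices _ _) hr.1

theorem ncard_rowSupport : (rowSupport k v r).ncard = 3 :=
  Set.ncard_eq_three.2 ⟨_, _, _, hr.1, (thirdPoint_ne_left hr).symm,
    (thirdPoint_ne_right hr).symm, rfl⟩

theorem rowSupport_subset_lineIndices : rowSupport k v r ⊆ lineIndices k v r.1 r.2 := by
  rintro i (rfl | rfl | rfl)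
  exacts [left_mem_lineIndices _ _, right_mem_lineIndices _ _, thirdPoint_mem_lineIndices hr]

theorem exists_support_eq_rowSupport [Fintype ι] (hv : Injective v) :
    ∃ w : ι → k, {i | w i ≠ 0} = rowSupport k v r ∧ ∑ i, w i • v i = 0 :=
  exists_relation_of_mem_line (hv.ne (thirdPoint_ne_left hr))
    (hv.ne (thirdPoint_ne_right hr)) (thirdPoint_mem_lineIndices hr)

end Configuration

section Counting

variable {k E ι : Type*} [Field k] [AddCommGroup E] [Module k E] {v : ι → E}

theorem three_mul_ncard_le_ncard_setOf_mem_rowSupport [Finite ι] (hv : Injective v) (p : ι) :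
    3 * {j | (p, j) ∈ specialPairs k v}.ncard ≤
      {r | r ∈ specialPairs k v ∧ p ∈ rowSupport k v r}.ncard := by
  classical
  set N := {j | (p, j) ∈ specialPairs k v}
  have hsol (j : ι) : ∃ g, j ∈ N → g ∈ lineIndices k v p j ∧
      latinSquareOn (lineIndices k v p j) g j = p := by
    by_cases hj : j ∈ N
    · obtain ⟨g, hg, hgj⟩ := ((isIdempotentLatinSquareOn_lineIndices hj.2).bijOn_right j
        (right_mem_lineIndices p j)).surjOn (left_mem_lineIndices p j)
      exact ⟨g, fun _ => ⟨hg, hgj⟩⟩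
    · exact ⟨j, fun h => (hj h).elim⟩
  choose g hg using hsol
  have hgN {j} (hj : j ∈ N) : (g j, j) ∈ specialPairs k v ∧ thirdPoint k v (g j) j = p := by
    obtain ⟨hgL, hgj⟩ := hg j hj
    have hne : g j ≠ j := by
      rintro hgj'
      rw [hgj', (isIdempotentLatinSquareOn_lineIndices hj.2).idem j
        (right_mem_lineIndices p j)] at hgj
      exact hj.1 hgj.symm
    have hline := lineIndices_eq_of_mem hgL (right_mem_lineIndices p j) (hv.ne hne)
    exact ⟨⟨hne, hline ▸ hj.2⟩, by
      rw [thirdPoint_eq_of_mem hgL (right_mem_lineIndices p j) (hv.ne hne), hgj]⟩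
  -- the three rows `(p, j)`, `(j, p)` and `(g j, j)` contain `p` in the three positions
  let φ : Fin 3 × ι → ι × ι := fun x => ![(p, x.2), (x.2, p), (g x.2, x.2)] x.1
  have hφ : LeftInvOn (fun r => (posIn p r, if r.2 = p then r.1 else r.2)) φ (univ ×ˢ N) := by
    rintro ⟨x, j⟩ ⟨-, hj⟩
    have hjp : j ≠ p := fun h => hj.1 h.symm
    have hgp : g j ≠ p := fun h => thirdPoint_ne_left (hgN hj).1 ((hgN hj).2.trans h.symm)
    fin_cases x <;> simp [φ, posIn, hjp, hjp.symm, hgp.symm]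
  calc 3 * N.ncard = ((univ : Set (Fin 3)) ×ˢ N).ncard := by
        rw [Set.ncard_prod, Set.ncard_univ, Nat.card_fin]
    _ ≤ _ := by
      refine Set.ncard_le_ncard_of_injOn φ ?_ hφ.injOn (Set.toFinite _)
      rintro ⟨x, j⟩ ⟨-, hj⟩
      fin_cases x
      · exact ⟨hj, Or.inl rfl⟩
      · exact ⟨⟨fun h => hj.1 h.symm, by rw [lineIndices_comm]; exact hj.2⟩, Or.inr (Or.inl rfl)⟩
      · exact ⟨(hgN hj).1, Or.inr (Or.inr (hgN hj).2.symm)⟩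

theorem ncard_setOf_mem_rowSupport_le_six (hv : Injective v) {p q : ι} (hpq : p ≠ q) :
    {r | r ∈ specialPairs k v ∧ p ∈ rowSupport k v r ∧ q ∈ rowSupport k v r}.ncard ≤ 6 := by
  classical
  set L := lineIndices k v p q
  set S := {r | r ∈ specialPairs k v ∧ p ∈ rowSupport k v r ∧ q ∈ rowSupport k v r}
  -- every row through `p` and `q` is a row of the Latin square on their line
  have hS {r} (hr : r ∈ S) : r.1 ∈ L ∧ r.2 ∈ L ∧ 3 ≤ L.ncard ∧
      thirdPoint k v r.1 r.2 = latinSquareOn L r.1 r.2 := by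
    obtain ⟨hr, hp, hq⟩ := hr
    have hsub := rowSupport_subset_lineIndices hr
    rw [show L = lineIndices k v r.1 r.2 from lineIndices_eq_of_mem (hsub hp) (hsub hq) (hv.ne hpq)]
    exact ⟨left_mem_lineIndices _ _, right_mem_lineIndices _ _, hr.2, rfl⟩
  have hpos {r} (hr : r ∈ S) : triple (latinSquareOn L) r (posIn p r) = p ∧
      triple (latinSquareOn L) r (posIn q r) = q := by
    have hthird := (hS hr).2.2.2
    obtain ⟨-, hp, hq⟩ := hr
    rw [rowSupport, hthird] at hp hq
    exact ⟨triple_posIn hp, triple_posIn hq⟩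
  have hne {r} (hr : r ∈ S) : posIn p r ≠ posIn q r := fun h =>
    hpq (((hpos hr).1.symm.trans (congrArg _ h)).trans (hpos hr).2)
  calc S.ncard ≤ {x : Fin 3 × Fin 3 | x.1 ≠ x.2}.ncard := by
        refine Set.ncard_le_ncard_of_injOn (fun r => (posIn p r, posIn q r)) ?_ ?_ (Set.toFinite _)
        · exact fun r hr => hne hr
        · intro r hr r' hr' h
          obtain ⟨hp, hq⟩ : posIn p r = posIn p r' ∧ posIn q r = posIn q r' := Prod.ext_iff.1 h
          obtain ⟨h₁, h₂, hL, -⟩ := hS hr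
          obtain ⟨h₁', h₂', -, -⟩ := hS hr'
          exact (isIdempotentLatinSquareOn_lineIndices hL).eq_of_triple_eq ⟨h₁, h₂⟩ ⟨h₁', h₂'⟩
            (hne hr) (by rw [(hpos hr).1, hp, (hpos hr').1]) (by rw [(hpos hr).2, hq, (hpos hr').2])
    _ = 6 := by rw [Set.ncard_eq_toFinset_card']; decide

end Counting

theorem OnSpecialLine.mem_specialPairs {n d : ℕ} {v : Fin n → Fin d → ℂ} (hv : Injective v)
    {i j : Fin n} (h : OnSpecialLine v i j) : (i, j) ∈ specialPairs ℂ v := by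
  obtain ⟨hji, l, hli, hlj, hcol⟩ := h
  have hl : l ∈ lineIndices ℂ v i j :=
    hcol.mem_affineSpan_of_mem_of_ne (by simp) (by simp) (by simp) (hv.ne hji.symm)
  refine ⟨hji.symm, ?_⟩
  calc 3 = ({i, j, l} : Set (Fin n)).ncard :=
        (Set.ncard_eq_three.2 ⟨i, j, l, hji.symm, hli.symm, hlj.symm, rfl⟩).symm
    _ ≤ _ := Set.ncard_le_ncard <| by
        rintro x (rfl | rfl | rfl)
        exacts [left_mem_lineIndices _ _, right_mem_lineIndices _ _, hl]

theorem SG_to_design_matrix {n d : ℕ} (v : Fin n → (Fin d → ℂ)) (δ : ℝ)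
    (hv : IsSGConfig v δ) :
    ∃ (m : ℕ) (A : Matrix (Fin m) (Fin n) ℂ),
      IsDesignMatrix A 3 (3 * ⌈δ * ((n : ℝ) - 1)⌉₊) 6 ∧
      (∀ i : Fin m, ({j : Fin n | A i j ≠ 0}).ncard = 3) ∧
      A * Matrix.of (fun (i : Fin n) (j : Fin d) => v i j) = 0 := by
  obtain ⟨hinj, hsg⟩ := hv
  obtain ⟨m, A, hrows, hcount, hAV⟩ :=
    exists_matrix_of_relations fun r (hr : r ∈ specialPairs ℂ v) =>
      exists_support_eq_rowSupport hr hinj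
  have hrow (i : Fin m) : {j | A i j ≠ 0}.ncard = 3 := by
    obtain ⟨r, hr, h⟩ := hrows i
    rw [h, ncard_rowSupport hr]
  have hdeg (p : Fin n) : ⌈δ * ((n : ℝ) - 1)⌉₊ ≤ {j | (p, j) ∈ specialPairs ℂ v}.ncard :=
    Nat.ceil_le.2 <| (hsg p).trans <| by
      exact_mod_cast Set.ncard_le_ncard fun j (hj : OnSpecialLine v p j) =>
        hj.mem_specialPairs hinj
  refine ⟨m, A, ⟨fun i => (hrow i).le, fun p => ?_, fun p q hpq => ?_⟩, hrow, hAV⟩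
  · exact (Nat.mul_le_mul_left 3 (hdeg p)).trans
      ((three_mul_ncard_le_ncard_setOf_mem_rowSupport hinj p).trans_eq (hcount (p ∈ ·)).symm)
  · exact (hcount fun s => p ∈ s ∧ q ∈ s).trans_le (ncard_setOf_mem_rowSupport_le_six hinj hpq)
end
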